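/- arXiv:1702.02607 — 7 statements merged into one kernel-verified Lean document; each statement's English description precedes it below -/
import Mathlib

section
/- For all natural numbers n and k with 1 < k and k² ≤ n, there is no nonempty symmetric intersecting family of k-element subsets of {1,...,n}; equivalently, s(n,k) = 0 whenever 1 < k ≤ √n. -/
/-!
Transitivity of the automorphism group makes every point lie in the same number `D` of members
of the family `𝒜`. Double counting then gives `n D = |𝒜| k` and, for a fixed `S ∈ 𝒜`,
`k D = ∑_{T ∈ 𝒜} |S ∩ T| ≥ (|𝒜| - 1) + k`, since every other member meets `S`. Hence
`n (|𝒜| + 1) ≤ n k D = k² |𝒜|`, which forces `n < k²` as soon as `k ≥ 2`.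
-/

open scoped Classical

/-- A family of finite sets is intersecting if any two of its members meet. -/
def IsIntersecting {α : Type*} [DecidableEq α] (A : Finset (Finset α)) : Prop :=
  ∀ x ∈ A, ∀ y ∈ A, (x ∩ y).Nonempty

/-- A family of finite sets is symmetric if its automorphism group is transitive:
for all `i j` there is a permutation `σ` with `σ(𝒜) = 𝒜` and `σ i = j`. -/
def IsSymmetricFam {α : Type*} [DecidableEq α] (A : Finset (Finset α)) : Prop :=
  ∀ i j : α, ∃ σ : Equiv.Perm α, A.image (fun x => x.image σ) = A ∧ σ i = j

/-- `s(n,k)`: the maximum size of a symmetric intersecting family of `k`-element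
subsets of `[n]` (the maximum over the empty collection being `0`). -/
noncomputable def symIntMax (n k : ℕ) : ℕ :=
  sSup {m | ∃ A : Finset (Finset (Fin n)),
    (∀ x ∈ A, x.card = k) ∧ IsSymmetricFam A ∧ IsIntersecting A ∧ A.card = m}

open Finset

section

variable {α : Type*} [DecidableEq α] {A : Finset (Finset α)}

theorem IsSymmetricFam.card_filter_mem_eq (hA : IsSymmetricFam A) (i j : α) :
    #{T ∈ A | i ∈ T} = #{T ∈ A | j ∈ T} := by
  obtain ⟨σ, hσA, rfl⟩ := hA i j
  have : {T ∈ A | σ i ∈ T} = {T ∈ A | i ∈ T}.image (·.image σ) := by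
    conv_lhs => rw [← hσA]
    simp [filter_image, σ.injective.eq_iff]
  rw [this, card_image_of_injective _ (image_injective σ.injective)]

theorem isSymmetricFam_empty : IsSymmetricFam (∅ : Finset (Finset α)) :=
  fun i j => ⟨Equiv.swap i j, image_empty _, Equiv.swap_apply_left i j⟩

theorem IsIntersecting.card_add_card_le_sum_card_inter (hA : IsIntersecting A) {S : Finset α}
    (hS : S ∈ A) : #A + #S ≤ ∑ T ∈ A, #(S ∩ T) + 1 := by
  have hothers : #(A.erase S) ≤ ∑ T ∈ A.erase S, #(S ∩ T) := by
    simpa using (A.erase S).card_nsmul_le_sum _ 1 fun T hT =>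
      Nat.one_le_iff_ne_zero.2 (card_pos.2 (hA S hS T (mem_of_mem_erase hT))).ne'
  calc #A + #S = #(A.erase S) + #(S ∩ S) + 1 := by rw [inter_self, ← card_erase_add_one hS]; ring
    _ ≤ ∑ T ∈ A.erase S, #(S ∩ T) + #(S ∩ S) + 1 := by gcongr
    _ = ∑ T ∈ A, #(S ∩ T) + 1 := by rw [sum_erase_add _ _ hS]

theorem IsSymmetricFam.card_lt_sq [Fintype α] {k : ℕ} (hk : 1 < k) (hcard : ∀ T ∈ A, #T = k)
    (hsym : IsSymmetricFam A) (hint : IsIntersecting A) (hne : A.Nonempty) :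
    Fintype.card α < k ^ 2 := by
  obtain ⟨S, hS⟩ := hne
  obtain ⟨a, -⟩ := card_pos.1 ((hcard S hS).symm ▸ (zero_lt_one.trans hk))
  set D := #{T ∈ A | a ∈ T}
  have hdeg : ∀ i, #{T ∈ A | i ∈ T} = D := fun i => hsym.card_filter_mem_eq i a
  have htotal : #A * k = Fintype.card α * D := by
    rw [← sum_card hdeg, sum_congr rfl hcard, sum_const, smul_eq_mul]
  have hlocal : ∑ T ∈ A, #(S ∩ T) = k * D := by
    rw [sum_card_inter fun i _ => hdeg i, hcard S hS]
  have hlow := hint.card_add_card_le_sum_card_inter hS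
  rw [hlocal, hcard S hS] at hlow
  by_contra! hn
  have : Fintype.card α * (#A + k) ≤ Fintype.card α * (#A + 1) :=
    calc Fintype.card α * (#A + k) ≤ Fintype.card α * (k * D + 1) := by gcongr
      _ = k ^ 2 * #A + Fintype.card α := by rw [mul_add, mul_left_comm, ← htotal]; ring
      _ ≤ Fintype.card α * (#A + 1) := by rw [mul_add_one]; gcongr
  have hpos : 0 < Fintype.card α := by nlinarith
  have := le_of_mul_le_mul_left this hpos
  omega

end

/-- For `1 < k` with `k² ≤ n`, every symmetric intersecting family of `k`-element
subsets of `[n]` is empty; equivalently `s(n,k) = 0` whenever `1 < k ≤ √n`. -/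
theorem no_symmetric_intersecting_of_small_k (n k : ℕ) (h1 : 1 < k) (h2 : k ^ 2 ≤ n) :
    (∀ A : Finset (Finset (Fin n)), (∀ x ∈ A, x.card = k) →
      IsSymmetricFam A → IsIntersecting A → A = ∅) ∧
    symIntMax n k = 0 := by
  have hempty : ∀ A : Finset (Finset (Fin n)), (∀ x ∈ A, x.card = k) →
      IsSymmetricFam A → IsIntersecting A → A = ∅ := fun A hcard hsym hint =>
    not_nonempty_iff_eq_empty.1 fun hne =>
      (hsym.card_lt_sq h1 hcard hint hne).not_ge (by simpa using h2)
  refine ⟨hempty, ?_⟩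
  have hsizes : {m | ∃ A : Finset (Finset (Fin n)),
      (∀ x ∈ A, x.card = k) ∧ IsSymmetricFam A ∧ IsIntersecting A ∧ A.card = m} = {0} := by
    ext m
    constructor
    · rintro ⟨A, hcard, hsym, hint, rfl⟩
      simp [hempty A hcard hsym hint]
    · rintro rfl
      exact ⟨∅, by simp, isSymmetricFam_empty, by simp [IsIntersecting], card_empty⟩
  rw [symIntMax, hsizes, csSup_singleton]
end

section
/- Let n, k ∈ ℕ with k ≤ n, and let 0 < p < 1 and 0 < φ < 1 be real numbers satisfying p ≥ k/n + √(2n·log(1/φ))/n. Then for any nonempty family ℱ of k-element subsets of [n], we have μ_p(ℱ↑) > (1 − φ)·|ℱ|/C(n,k). -/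
open scoped Classical

/-- The `p`-biased measure of a family of subsets of `[n]`:
`μ_p(ℱ) = Σ_{x ∈ ℱ} p^|x| (1-p)^(n-|x|)`. -/
noncomputable def biasedMeasure (n : ℕ) (p : ℝ) (F : Finset (Finset (Fin n))) : ℝ :=
  ∑ x ∈ F, p ^ x.card * (1 - p) ^ (n - x.card)

/-- The up-closure (smallest increasing family containing `ℱ`):
`ℱ↑ = {y ⊆ [n] : x ⊆ y for some x ∈ ℱ}`. -/
noncomputable def upClosure (n : ℕ) (F : Finset (Finset (Fin n))) : Finset (Finset (Fin n)) :=
  Finset.univ.filter (fun y => ∃ x ∈ F, x ⊆ y)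

/-!
Double counting pairs `x ⊆ y` with `x ∈ ℱ` and `y` an `m`-set of `ℱ↑` shows that every
layer `m ≥ k` of `ℱ↑` has density at least `|ℱ| / C(n,k)` in `[n]^(m)`. Summing over layers,
`μ_p(ℱ↑) ≥ |ℱ| / C(n,k) · P(Bin(n,p) ≥ k)`, and the Chernoff bound
`P(Bin(n,p) < k) < exp(-n t² / 2)` for `k ≤ n(p - t)`, with `t = √(2n log(1/φ)) / n`,
makes the lower tail smaller than `φ`.
-/

open Finset Real

theorem Real.exp_neg_le_one_sub_add_sq_div_two {t : ℝ} (ht : 0 ≤ t) :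
    exp (-t) ≤ 1 - t + t ^ 2 / 2 := by
  let g : ℝ → ℝ := fun x => 1 - x + x ^ 2 / 2 - exp (-x)
  have hg : ∀ x, HasDerivAt g (x - 1 + exp (-x)) x := fun x => by
    refine ((((hasDerivAt_id x).const_sub 1).add ((hasDerivAt_pow 2 x).div_const 2)).sub
      (hasDerivAt_neg x).exp).congr_deriv ?_
    norm_num; ring
  have hmono : MonotoneOn g (Set.Ici 0) :=
    monotoneOn_of_hasDerivWithinAt_nonneg (convex_Ici 0)
      (fun x _ => (hg x).continuousAt.continuousWithinAt) (fun x _ => (hg x).hasDerivWithinAt)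
      (fun x _ => by linarith [one_sub_le_exp_neg x])
  simpa [g] using hmono Set.self_mem_Ici ht ht

theorem mul_exp_neg_add_one_sub_le_exp {p t : ℝ} (hp0 : 0 ≤ p) (hp1 : p ≤ 1) (ht : 0 ≤ t) :
    p * exp (-t) + (1 - p) ≤ exp (-(p * t) + t ^ 2 / 2) := by
  have h := mul_le_mul_of_nonneg_left (exp_neg_le_one_sub_add_sq_div_two ht) hp0
  have h' : p * t ^ 2 ≤ t ^ 2 := mul_le_of_le_one_left (sq_nonneg t) hp1
  linarith [add_one_le_exp (-(p * t) + t ^ 2 / 2)]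

theorem sum_range_choose_mul_pow_lt_exp {n k : ℕ} {p t : ℝ} (hp0 : 0 < p) (hp1 : p ≤ 1)
    (ht : 0 ≤ t) (hk : (k : ℝ) ≤ n * (p - t)) :
    ∑ m ∈ range k, n.choose m * p ^ m * (1 - p) ^ (n - m) < exp (-(n * t ^ 2 / 2)) := by
  have hkn : k ≤ n := by
    exact_mod_cast hk.trans (mul_le_of_le_one_right n.cast_nonneg (by linarith))
  have hterm : ∀ m ∈ range k, (n.choose m : ℝ) * p ^ m * (1 - p) ^ (n - m) ≤
      exp (t * k) * (n.choose m * (p * exp (-t)) ^ m * (1 - p) ^ (n - m)) := by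
    intro m hm
    have hmk : (m : ℝ) ≤ k := by exact_mod_cast (mem_range.1 hm).le
    have hexp : 1 ≤ exp (t * (k - m)) := one_le_exp (mul_nonneg ht (by linarith))
    calc (n.choose m : ℝ) * p ^ m * (1 - p) ^ (n - m)
        ≤ exp (t * (k - m)) * (n.choose m * p ^ m * (1 - p) ^ (n - m)) :=
          le_mul_of_one_le_left (by positivity) hexp
      _ = _ := by
          rw [mul_pow, ← exp_nat_mul, show t * (k - m) = t * k + m * -t by ring, exp_add]; ring
  calc ∑ m ∈ range k, (n.choose m : ℝ) * p ^ m * (1 - p) ^ (n - m)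
      ≤ exp (t * k) * ∑ m ∈ range k, n.choose m * (p * exp (-t)) ^ m * (1 - p) ^ (n - m) := by
        rw [mul_sum]; exact sum_le_sum hterm
    _ < exp (t * k) *
          ∑ m ∈ range (n + 1), n.choose m * (p * exp (-t)) ^ m * (1 - p) ^ (n - m) := by
        gcongr
        -- the positive term `m = n` is missing on the left since `k ≤ n`
        refine sum_lt_sum_of_subset (range_subset_range.2 (by omega)) (self_mem_range_succ n)
          ?_ ?_ ?_
        · simpa using hkn
        · rw [Nat.choose_self, Nat.sub_self]; positivity
        · intros; positivity
    _ = exp (t * k) * (p * exp (-t) + (1 - p)) ^ n := by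
        rw [add_pow]; exact congrArg _ (sum_congr rfl fun _ _ => by ring)
    _ ≤ exp (t * k) * exp (-(p * t) + t ^ 2 / 2) ^ n := by
        gcongr
        exact mul_exp_neg_add_one_sub_le_exp hp0.le hp1 ht
    _ ≤ exp (-(n * t ^ 2 / 2)) := by
        rw [← exp_nat_mul, ← exp_add, exp_le_exp]
        nlinarith [mul_le_mul_of_nonneg_left hk ht]

theorem sum_range_choose_mul_pow_lt {n k : ℕ} {p φ : ℝ} (hk : k ≤ n) (hp0 : 0 < p)
    (hp1 : p ≤ 1) (hφ0 : 0 < φ) (hφ1 : φ ≤ 1)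
    (hpk : (k : ℝ) / n + √(2 * n * log (1 / φ)) / n ≤ p) :
    ∑ m ∈ range k, n.choose m * p ^ m * (1 - p) ^ (n - m) < φ := by
  rcases Nat.eq_zero_or_pos k with rfl | hk0
  · simpa using hφ0
  have hn : (0 : ℝ) < n := by exact_mod_cast hk0.trans_le hk
  set t := √(2 * n * log (1 / φ)) / n
  have hL : 0 ≤ log (1 / φ) := log_nonneg (one_le_one_div hφ0 hφ1)
  have hnt : n * t ^ 2 / 2 = log (1 / φ) := by
    rw [div_pow, sq_sqrt (by positivity)]; field_simp
  have hkt : (k : ℝ) ≤ n * (p - t) := (div_le_iff₀' hn).1 (by linarith)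
  calc _ < exp (-(n * t ^ 2 / 2)) := sum_range_choose_mul_pow_lt_exp hp0 hp1 (by positivity) hkt
    _ = φ := by rw [hnt, one_div, log_inv, neg_neg, exp_log hφ0]

theorem card_mul_choose_le_card_filter_upClosure {n k m : ℕ} {F : Finset (Finset (Fin n))}
    (hF : ∀ x ∈ F, #x = k) (hkm : k ≤ m) :
    #F * n.choose m ≤ #{y ∈ upClosure n F | #y = m} * n.choose k := by
  set G := {y ∈ upClosure n F | #y = m}
  have hsuper : ∀ x ∈ F, (n - k).choose (m - k) ≤ #(G.bipartiteAbove (· ⊆ ·) x) := by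
    intro x hx
    have hxc : n - k = #xᶜ := by rw [card_compl, Fintype.card_fin, hF x hx]
    rw [hxc, ← card_powersetCard]
    refine card_le_card_of_injOn (x ∪ ·) (fun z hz => ?_) (fun z₁ hz₁ z₂ hz₂ h => ?_)
    · rw [mem_coe, mem_powersetCard, subset_compl_iff_disjoint_left] at hz
      simp only [mem_coe, mem_bipartiteAbove, G, upClosure, mem_filter, mem_univ, true_and]
      refine ⟨⟨⟨x, hx, subset_union_left⟩, ?_⟩, subset_union_left⟩
      rw [card_union_of_disjoint hz.1, hz.2, hF x hx, Nat.add_sub_cancel' hkm]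
    · rw [mem_coe, mem_powersetCard, subset_compl_iff_disjoint_left] at hz₁ hz₂
      calc z₁ = (x ∪ z₁) \ x := (union_sdiff_cancel_left hz₁.1).symm
        _ = (x ∪ z₂) \ x := congrArg (· \ x) h
        _ = z₂ := union_sdiff_cancel_left hz₂.1
  have hsub : ∀ y ∈ G, #(F.bipartiteBelow (· ⊆ ·) y) ≤ m.choose k := by
    intro y hy
    rw [← (mem_filter.1 hy).2, ← card_powersetCard]
    exact card_le_card fun x hx =>
      have hx' := (mem_bipartiteBelow _).1 hx
      mem_powersetCard.2 ⟨hx'.2, hF x hx'.1⟩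
  refine Nat.le_of_mul_le_mul_right ?_ (Nat.choose_pos hkm)
  calc #F * n.choose m * m.choose k = #F * (n - k).choose (m - k) * n.choose k := by
        rw [mul_assoc, Nat.choose_mul hkm]; ring
    _ ≤ #G * m.choose k * n.choose k :=
        Nat.mul_le_mul_right _ (card_mul_le_card_mul (· ⊆ ·) hsuper hsub)
    _ = #G * n.choose k * m.choose k := by ring

theorem biasedMeasure_eq_sum_card_filter (n : ℕ) (p : ℝ) (G : Finset (Finset (Fin n))) :
    biasedMeasure n p G =
      ∑ m ∈ range (n + 1), #{y ∈ G | #y = m} * p ^ m * (1 - p) ^ (n - m) := by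
  rw [biasedMeasure, ← sum_fiberwise_of_maps_to' (t := range (n + 1))
    (fun y _ => mem_range_succ_iff.2 ((card_le_univ y).trans_eq (Fintype.card_fin n)))
    fun m => p ^ m * (1 - p) ^ (n - m)]
  simp only [sum_const, nsmul_eq_mul, mul_assoc]

theorem sum_range_choose_mul_pow_one_sub (n : ℕ) (p : ℝ) :
    ∑ m ∈ range (n + 1), n.choose m * p ^ m * (1 - p) ^ (n - m) = 1 := by
  calc _ = (p + (1 - p)) ^ n := by rw [add_pow]; exact sum_congr rfl fun _ _ => by ring
    _ = 1 := by rw [add_sub_cancel, one_pow]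

theorem card_div_choose_mul_le_biasedMeasure_upClosure {n k : ℕ} {p : ℝ}
    {F : Finset (Finset (Fin n))} (hF : ∀ x ∈ F, #x = k) (hk : k ≤ n) (hp0 : 0 ≤ p)
    (hp1 : p ≤ 1) :
    #F / n.choose k * (1 - ∑ m ∈ range k, n.choose m * p ^ m * (1 - p) ^ (n - m)) ≤
      biasedMeasure n p (upClosure n F) := by
  have hC : (0 : ℝ) < n.choose k := mod_cast Nat.choose_pos hk
  have hlevel : ∀ m ∈ Ico k (n + 1),
      #F / n.choose k * (n.choose m * p ^ m * (1 - p) ^ (n - m)) ≤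
        #{y ∈ upClosure n F | #y = m} * p ^ m * (1 - p) ^ (n - m) := by
    intro m hm
    calc #F / n.choose k * (n.choose m * p ^ m * (1 - p) ^ (n - m))
        = #F * n.choose m / n.choose k * (p ^ m * (1 - p) ^ (n - m)) := by ring
      _ ≤ #{y ∈ upClosure n F | #y = m} * (p ^ m * (1 - p) ^ (n - m)) := by
          gcongr
          rw [div_le_iff₀ hC]
          exact_mod_cast card_mul_choose_le_card_filter_upClosure hF (mem_Ico.1 hm).1
      _ = _ := by ring
  have htail : 1 - ∑ m ∈ range k, (n.choose m : ℝ) * p ^ m * (1 - p) ^ (n - m) =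
      ∑ m ∈ Ico k (n + 1), (n.choose m : ℝ) * p ^ m * (1 - p) ^ (n - m) := by
    rw [sub_eq_iff_eq_add', sum_range_add_sum_Ico _ (by omega), sum_range_choose_mul_pow_one_sub]
  rw [htail, mul_sum, biasedMeasure_eq_sum_card_filter]
  calc _ ≤ ∑ m ∈ Ico k (n + 1), #{y ∈ upClosure n F | #y = m} * p ^ m * (1 - p) ^ (n - m) :=
        sum_le_sum hlevel
    _ ≤ _ := sum_le_sum_of_subset_of_nonneg (fun m hm => mem_range.2 (mem_Ico.1 hm).2)
        fun _ _ _ => by positivity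

/-- If `0 < p, φ < 1` satisfy `p ≥ k/n + √(2n log(1/φ))/n`, then for any nonempty
family `ℱ` of `k`-element subsets of `[n]`, `μ_p(ℱ↑) > (1-φ)·|ℱ|/C(n,k)`. -/
theorem biased_measure_upClosure_lower_bound (n k : ℕ) (hk : k ≤ n) (p φ : ℝ)
    (hp0 : 0 < p) (hp1 : p < 1) (hφ0 : 0 < φ) (hφ1 : φ < 1)
    (hpk : (k : ℝ) / n + Real.sqrt (2 * n * Real.log (1 / φ)) / n ≤ p)
    (F : Finset (Finset (Fin n))) (hF : ∀ x ∈ F, x.card = k) (hne : F.Nonempty) :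
    (1 - φ) * (F.card : ℝ) / (n.choose k : ℝ) < biasedMeasure n p (upClosure n F) := by
  have hFC : (0 : ℝ) < #F / n.choose k := by
    have := hne.card_pos
    have := Nat.choose_pos hk
    positivity
  calc (1 - φ) * (F.card : ℝ) / (n.choose k : ℝ) = #F / n.choose k * (1 - φ) := by ring
    _ < #F / n.choose k * (1 - ∑ m ∈ range k, n.choose m * p ^ m * (1 - p) ^ (n - m)) := by
        gcongr
        exact sum_range_choose_mul_pow_lt hk hp0 hp1.le hφ0 hφ1.le hpk
    _ ≤ biasedMeasure n p (upClosure n F) :=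
        card_div_choose_mul_le_biasedMeasure_upClosure hF hk hp0.le hp1.le
end

section
/- For all n, k ∈ ℕ with 1 ≤ k ≤ n, the family ℱ(n,k) of all k-element subsets S of ℤ_n whose longest run of consecutive elements is strictly longer than the longest run of consecutive non-elements is both symmetric and intersecting: any two members of ℱ(n,k) have nonempty intersection, and the automorphism group of ℱ(n,k) acts transitively on ℤ_n. -/
/-!
If `S` and `T` were disjoint members, then `T ⊆ Sᶜ` and `S ⊆ Tᶜ`, so by monotonicity of the
longest run `maxRun T ≤ maxRun Sᶜ < maxRun S ≤ maxRun Tᶜ < maxRun T`. The rotations `x ↦ x + c`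
preserve runs, hence preserve `ℱ(n,k)`, and they act transitively on `ℤ_n`.
-/

open scoped Classical

/-- `S ⊆ ℤ_n` contains a run `{i, i+1, ..., i+l-1}` (arithmetic mod `n`) of length `l`. -/
def HasRun {n : ℕ} (S : Set (ZMod n)) (l : ℕ) : Prop :=
  ∃ i : ZMod n, ∀ t : ℕ, t < l → i + (t : ZMod n) ∈ S

/-- The maximum length (at most `n`) of a run of consecutive elements of `S ⊆ ℤ_n`. -/
noncomputable def maxRun {n : ℕ} (S : Set (ZMod n)) : ℕ :=
  sSup {l | l ≤ n ∧ HasRun S l}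

/-- `ℱ(n,k)`: the family of all `k`-element subsets `S ⊆ ℤ_n` whose longest run of
consecutive elements is strictly longer than the longest run of consecutive
non-elements. -/
def calF (n k : ℕ) : Set (Finset (ZMod n)) :=
  {S | S.card = k ∧ maxRun ((S : Set (ZMod n))ᶜ) < maxRun (S : Set (ZMod n))}

variable {n : ℕ}

lemma maxRun_mono {A B : Set (ZMod n)} (h : A ⊆ B) : maxRun A ≤ maxRun B := by
  apply csSup_le_csSup
  · exact ⟨n, fun l hl => hl.1⟩
  · exact ⟨0, Nat.zero_le n, 0, fun t ht => absurd ht (Nat.not_lt_zero t)⟩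
  · rintro l ⟨hln, i, hi⟩
    exact ⟨hln, i, fun t ht => h (hi t ht)⟩

lemma not_disjoint_of_maxRun_compl_lt {A B : Set (ZMod n)}
    (hA : maxRun Aᶜ < maxRun A) (hB : maxRun Bᶜ < maxRun B) : ¬Disjoint A B := by
  intro hAB
  have : maxRun B < maxRun B :=
    calc maxRun B ≤ maxRun Aᶜ := maxRun_mono hAB.symm.subset_compl_right
      _ < maxRun A := hA
      _ ≤ maxRun Bᶜ := maxRun_mono hAB.subset_compl_right
      _ < maxRun B := hB
  exact this.false

lemma hasRun_image_addRight (c : ZMod n) (A : Set (ZMod n)) (l : ℕ) :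
    HasRun (Equiv.addRight c '' A) l ↔ HasRun A l := by
  constructor
  · rintro ⟨i, hi⟩
    refine ⟨i - c, fun t ht => ?_⟩
    obtain ⟨a, ha, hac⟩ := hi t ht
    rw [Equiv.coe_addRight] at hac
    rwa [show a = i - c + t by linear_combination hac] at ha
  · rintro ⟨i, hi⟩
    exact ⟨i + c, fun t ht => ⟨i + t, hi t ht, add_right_comm i t c⟩⟩

lemma maxRun_image_addRight (c : ZMod n) (A : Set (ZMod n)) :
    maxRun (Equiv.addRight c '' A) = maxRun A := by
  simp only [maxRun, hasRun_image_addRight]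

lemma image_addRight_mem_calF_iff {k : ℕ} (c : ZMod n) (S : Finset (ZMod n)) :
    S.image (Equiv.addRight c) ∈ calF n k ↔ S ∈ calF n k := by
  simp only [calF, Set.mem_ofPred_eq, Finset.card_image_of_injective _ (Equiv.injective _),
    Finset.coe_image, ← Set.image_compl_eq (Equiv.addRight c).bijective, maxRun_image_addRight]

theorem calF_intersecting_and_symmetric_general (n k : ℕ) :
    (∀ S ∈ calF n k, ∀ T ∈ calF n k, (S ∩ T).Nonempty) ∧
    (∀ i j : ZMod n, ∃ σ : Equiv.Perm (ZMod n),
      (∀ S : Finset (ZMod n), S.image σ ∈ calF n k ↔ S ∈ calF n k) ∧ σ i = j) := by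
  refine ⟨fun S hS T hT => ?_, fun i j => ?_⟩
  · rw [← Finset.not_disjoint_iff_nonempty_inter, ← Finset.disjoint_coe]
    exact not_disjoint_of_maxRun_compl_lt hS.2 hT.2
  · exact ⟨Equiv.addRight (j - i), image_addRight_mem_calF_iff (j - i), by simp⟩

/-- For `1 ≤ k ≤ n`, the family `ℱ(n,k)` is intersecting and symmetric. -/
theorem calF_intersecting_and_symmetric (n k : ℕ) (h1 : 1 ≤ k) (h2 : k ≤ n) :
    (∀ S ∈ calF n k, ∀ T ∈ calF n k, (S ∩ T).Nonempty) ∧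
    (∀ i j : ZMod n, ∃ σ : Equiv.Perm (ZMod n),
      (∀ S : Finset (ZMod n), S.image σ ∈ calF n k ↔ S ∈ calF n k) ∧ σ i = j) :=
  calF_intersecting_and_symmetric_general n k
end

section
/- Let n, k, l ∈ ℕ with 1 ≤ k, 2k ≤ n, and l ≥ (log n + 2·log 2)/(log n − log(n−k)). Then the number of k-element subsets S of ℤ_n containing no set of l cyclically consecutive elements and avoiding no set of l cyclically consecutive elements (i.e., there is no i ∈ ℤ_n with {i, i+1, ..., i+l−1} ⊆ S, and no i ∈ ℤ_n with {i, i+1, ..., i+l−1} ∩ S = ∅, arithmetic mod n) is at least (1/2)·C(n,k). -/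
open scoped Classical

open Finset

/-! A `k`-set `S` is bad if some cyclic interval `{i, …, i + l - 1}` lies inside `S` or outside
it. For a fixed interval, the `k`-sets avoiding it number `C(n - l, k) ≤ ((n - k)/n)^l C(n, k)`
and, passing to complements, those containing it number `C(n - l, n - k) ≤ (k/n)^l C(n, k)`.
A union bound over the `n` intervals leaves at most `2n((n - k)/n)^l C(n, k)` bad sets, and the
hypothesis on `l` is exactly `4n((n - k)/n)^l ≤ 1`. -/

theorem Nat.pow_mul_choose_sub_le (n k l : ℕ) :
    n ^ l * (n - l).choose k ≤ (n - k) ^ l * n.choose k := by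
  rcases Nat.eq_zero_or_pos k with rfl | hk
  · simp
  induction l with
  | zero => simp
  | succ l ih =>
    rcases lt_or_ge (n - (l + 1)) k with hlt | hle
    · simp [Nat.choose_eq_zero_of_lt hlt]
    obtain ⟨m, hm⟩ : ∃ m, n - l = m + 1 := ⟨n - (l + 1), by omega⟩
    have hsucc : n - (l + 1) = m := by omega
    have hstep : n * (m + 1 - k) ≤ (n - k) * (m + 1) := by
      zify [(by omega : k ≤ n), (by omega : k ≤ m + 1)]
      nlinarith [Nat.mul_le_mul_left k (by omega : m + 1 ≤ n)]
    refine Nat.le_of_mul_le_mul_right ?_ (Nat.succ_pos m)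
    calc n ^ (l + 1) * (n - (l + 1)).choose k * (m + 1)
        = n ^ l * (m + 1).choose k * (n * (m + 1 - k)) := by
          rw [hsucc, mul_assoc, Nat.choose_mul_succ_eq]; ring
      _ ≤ (n - k) ^ l * n.choose k * ((n - k) * (m + 1)) := by
          rw [← hm]; exact Nat.mul_le_mul ih (hm ▸ hstep)
      _ = (n - k) ^ (l + 1) * n.choose k * (m + 1) := by ring

section
variable {α : Type*} [Fintype α] [DecidableEq α]

theorem Finset.card_filter_disjoint_powersetCard_univ (T : Finset α) (k : ℕ) :
    #{S ∈ (univ : Finset α).powersetCard k | Disjoint T S} =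
      (Fintype.card α - #T).choose k := by
  have : {S ∈ (univ : Finset α).powersetCard k | Disjoint T S} = Tᶜ.powersetCard k := by
    ext S
    simp [mem_powersetCard, ← le_compl_iff_disjoint_left, and_comm]
  rw [this, card_powersetCard, card_compl]

theorem Finset.card_filter_superset_powersetCard_univ (T : Finset α) {k : ℕ}
    (hk : k ≤ Fintype.card α) :
    #{S ∈ (univ : Finset α).powersetCard k | T ⊆ S} =
      (Fintype.card α - #T).choose (Fintype.card α - k) := by
  have : {S ∈ (univ : Finset α).powersetCard k | T ⊆ S}.map ⟨compl, compl_injective⟩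
      = {S ∈ (univ : Finset α).powersetCard (Fintype.card α - k) | Disjoint T S} := by
    ext S
    simp only [mem_map, mem_filter, mem_powersetCard_univ, Function.Embedding.coeFn_mk]
    constructor
    · rintro ⟨U, ⟨rfl, hTU⟩, rfl⟩
      exact ⟨card_compl U, disjoint_compl_right.mono_left hTU⟩
    · rintro ⟨hS, hTS⟩
      exact ⟨Sᶜ, ⟨by rw [card_compl, hS]; omega, le_compl_iff_disjoint_right.mpr hTS⟩,
        compl_compl S⟩
  rw [← card_map, this, card_filter_disjoint_powersetCard_univ]

end

theorem Real.four_mul_mul_pow_le_pow {x y : ℝ} {l : ℕ} (hy : 0 < y) (hyx : y < x)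
    (hl : (Real.log x + 2 * Real.log 2) / (Real.log x - Real.log y) ≤ l) :
    4 * x * y ^ l ≤ x ^ l := by
  have hx : 0 < x := hy.trans hyx
  have hlog : Real.log x + 2 * Real.log 2 ≤ l * (Real.log x - Real.log y) :=
    (div_le_iff₀ (sub_pos.mpr (Real.log_lt_log hy hyx))).mp hl
  rw [← Real.log_le_log_iff (by positivity) (by positivity), Real.log_mul (by positivity)
    (by positivity), Real.log_mul (by norm_num) hx.ne', Real.log_pow, Real.log_pow,
    show (4 : ℝ) = 2 ^ 2 by norm_num, Real.log_pow]
  push_cast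
  linarith

section
variable {n : ℕ}

noncomputable def cyclicInterval (i : ZMod n) (l : ℕ) : Finset (ZMod n) :=
  (range l).image fun t : ℕ => i + (t : ZMod n)

theorem cyclicInterval_subset_iff {i : ZMod n} {l : ℕ} {S : Finset (ZMod n)} :
    cyclicInterval i l ⊆ S ↔ ∀ t < l, i + t ∈ S := by
  simp only [cyclicInterval, image_subset_iff, mem_range]

theorem disjoint_cyclicInterval_iff {i : ZMod n} {l : ℕ} {S : Finset (ZMod n)} :
    Disjoint (cyclicInterval i l) S ↔ ∀ t < l, i + t ∉ S := by
  simp only [cyclicInterval, disjoint_left, mem_image, mem_range, forall_exists_index, and_imp]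
  exact ⟨fun h t ht => h t ht rfl, fun h _ t ht hx => hx ▸ h t ht⟩

def HasMonochromaticRun (l : ℕ) (S : Finset (ZMod n)) : Prop :=
  ∃ i, cyclicInterval i l ⊆ S ∨ Disjoint (cyclicInterval i l) S

variable [NeZero n]

theorem card_cyclicInterval (i : ZMod n) (l : ℕ) : #(cyclicInterval i l) = min l n := by
  rcases le_total l n with hl | hl
  · rw [min_eq_left hl, cyclicInterval, card_image_of_injOn, card_range]
    intro s hs t ht hst
    simp only [coe_range, Set.mem_Iio] at hs ht
    simpa [ZMod.val_natCast_of_lt (hs.trans_le hl), ZMod.val_natCast_of_lt (ht.trans_le hl)]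
      using congrArg ZMod.val (add_left_cancel hst)
  · have : cyclicInterval i l = univ := eq_univ_of_forall fun x =>
      mem_image.mpr ⟨(x - i).val, mem_range.mpr ((ZMod.val_lt _).trans_le hl), by simp⟩
    rw [this, card_univ, ZMod.card, min_eq_right hl]

theorem pow_mul_card_disjoint_cyclicInterval_le (i : ZMod n) (k l : ℕ) :
    n ^ l * #{S ∈ (univ : Finset (ZMod n)).powersetCard k | Disjoint (cyclicInterval i l) S}
      ≤ (n - k) ^ l * n.choose k := by
  rw [card_filter_disjoint_powersetCard_univ, card_cyclicInterval, ZMod.card,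
    show n - min l n = n - l by omega]
  exact Nat.pow_mul_choose_sub_le n k l

theorem pow_mul_card_cyclicInterval_subset_le (i : ZMod n) {k : ℕ} (l : ℕ) (hk : k ≤ n) :
    n ^ l * #{S ∈ (univ : Finset (ZMod n)).powersetCard k | cyclicInterval i l ⊆ S}
      ≤ k ^ l * n.choose k := by
  rw [card_filter_superset_powersetCard_univ _ (by rwa [ZMod.card]), card_cyclicInterval,
    ZMod.card, show n - min l n = n - l by omega]
  simpa [Nat.sub_sub_self hk, Nat.choose_symm hk] using Nat.pow_mul_choose_sub_le n (n - k) l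

theorem pow_mul_card_filter_hasMonochromaticRun_le {k : ℕ} (l : ℕ) (hk : k ≤ n) :
    n ^ l * #{S ∈ (univ : Finset (ZMod n)).powersetCard k | HasMonochromaticRun l S} ≤
      n * ((k ^ l + (n - k) ^ l) * n.choose k) := by
  have hsub : {S ∈ (univ : Finset (ZMod n)).powersetCard k | HasMonochromaticRun l S} ⊆
      univ.biUnion fun i =>
        {S ∈ (univ : Finset (ZMod n)).powersetCard k | cyclicInterval i l ⊆ S} ∪
          {S ∈ (univ : Finset (ZMod n)).powersetCard k | Disjoint (cyclicInterval i l) S} := by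
    intro S
    simp only [mem_filter, mem_biUnion, mem_union, mem_univ, true_and]
    rintro ⟨hS, i, h⟩
    exact ⟨i, h.imp (⟨hS, ·⟩) (⟨hS, ·⟩)⟩
  calc _ ≤ n ^ l * ∑ i : ZMod n,
        (#{S ∈ (univ : Finset (ZMod n)).powersetCard k | cyclicInterval i l ⊆ S} +
          #{S ∈ (univ : Finset (ZMod n)).powersetCard k | Disjoint (cyclicInterval i l) S}) := by
        gcongr
        exact (card_le_card hsub).trans <| card_biUnion_le.trans <|
          sum_le_sum fun i _ => card_union_le _ _
    _ ≤ ∑ _i : ZMod n, (k ^ l + (n - k) ^ l) * n.choose k := by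
        rw [mul_sum]
        refine sum_le_sum fun i _ => ?_
        rw [mul_add, add_mul]
        exact add_le_add (pow_mul_card_cyclicInterval_subset_le i l hk)
          (pow_mul_card_disjoint_cyclicInterval_le i k l)
    _ = _ := by rw [sum_const, card_univ, ZMod.card, smul_eq_mul]

end

/-- For `1 ≤ k`, `2k ≤ n` and `l ≥ (log n + 2 log 2)/(log n - log(n-k))`, the number of
`k`-element subsets `S` of `ℤ_n` containing no set of `l` cyclically consecutive
elements and avoiding no set of `l` cyclically consecutive elements is at least
`(1/2)·C(n,k)`. -/
theorem count_subsets_without_long_runs (n k l : ℕ) (hk : 1 ≤ k) (hkn : 2 * k ≤ n)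
    (hl : (Real.log n + 2 * Real.log 2) / (Real.log n - Real.log ((n : ℝ) - k)) ≤ (l : ℝ)) :
    (1 / 2 : ℝ) * (n.choose k : ℝ) ≤
      (Set.ncard {S : Finset (ZMod n) | S.card = k ∧
        (¬ ∃ i : ZMod n, ∀ t : ℕ, t < l → i + (t : ZMod n) ∈ S) ∧
        (¬ ∃ i : ZMod n, ∀ t : ℕ, t < l → i + (t : ZMod n) ∉ S)} : ℝ) := by
  have : NeZero n := ⟨by omega⟩
  set bad := {S ∈ (univ : Finset (ZMod n)).powersetCard k | HasMonochromaticRun l S}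
  set good := {S ∈ (univ : Finset (ZMod n)).powersetCard k | ¬ HasMonochromaticRun l S}
  have hgood : {S : Finset (ZMod n) | S.card = k ∧
      (¬ ∃ i : ZMod n, ∀ t : ℕ, t < l → i + (t : ZMod n) ∈ S) ∧
      (¬ ∃ i : ZMod n, ∀ t : ℕ, t < l → i + (t : ZMod n) ∉ S)} = good := by
    ext S
    simp [good, HasMonochromaticRun, cyclicInterval_subset_iff, disjoint_cyclicInterval_iff,
      exists_or]
  have hsplit : (#good : ℝ) + #bad = n.choose k := by
    rw [add_comm]
    exact_mod_cast (card_filter_add_card_filter_not _).trans (by simp)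
  have hbad : n ^ l * #bad ≤ n * (2 * (n - k) ^ l * n.choose k) :=
    (pow_mul_card_filter_hasMonochromaticRun_le l (by omega)).trans <| by
      gcongr
      rw [two_mul]
      gcongr
      omega
  have hk' : (1 : ℝ) ≤ k := by exact_mod_cast hk
  have hkn' : 2 * (k : ℝ) ≤ n := by exact_mod_cast hkn
  have hkey := Real.four_mul_mul_pow_le_pow (by linarith) (by linarith) hl
  have hnl : (0 : ℝ) < n ^ l := pow_pos (by linarith) l
  have hbad_half : (#bad : ℝ) ≤ n.choose k / 2 := by
    refine le_of_mul_le_mul_left ?_ hnl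
    calc (n : ℝ) ^ l * #bad ≤ n * (2 * ((n : ℝ) - k) ^ l * n.choose k) := by
          rw [← Nat.cast_sub (by omega : k ≤ n)]; exact_mod_cast hbad
      _ = 4 * n * ((n : ℝ) - k) ^ l * n.choose k / 2 := by ring
      _ ≤ n ^ l * (n.choose k / 2) := by
          rw [mul_div_assoc]; gcongr
  rw [hgood, Set.ncard_coe_finset]
  linarith
end

section
/- Let n be a prime and k ∈ ℕ, and suppose there exists a nonempty symmetric intersecting family of k-element subsets of [n]. Then there exists a difference cover for ℤ_n of size k, i.e., a set x ⊆ ℤ_n with |x| = k and x − x = ℤ_n. Consequently, for n prime, g(n) = h(ℤ_n). -/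
open scoped Classical

/-- `g(n) = min{k : s(n,k) > 0}`. -/
noncomputable def gFun (n : ℕ) : ℕ := sInf {k | 0 < symIntMax n k}

/-- `h(ℤ_n)`: the minimum size of a difference cover for `ℤ_n`, i.e. of a set
`S ⊆ ℤ_n` with `S - S = ℤ_n`. -/
noncomputable def hZMod (n : ℕ) : ℕ :=
  sInf {m | ∃ S : Finset (ZMod n),
    (∀ g : ZMod n, ∃ i ∈ S, ∃ j ∈ S, i - j = g) ∧ S.card = m}

lemma cover_of_family (n k : ℕ) (hn : Nat.Prime n)
    (A : Finset (Finset (Fin n))) (hne : A.Nonempty)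
    (hcard : ∀ x ∈ A, x.card = k) (hsym : IsSymmetricFam A) (hint : IsIntersecting A) :
    ∃ x : Finset (ZMod n), x.card = k ∧ ∀ g : ZMod n, ∃ i ∈ x, ∃ j ∈ x, i - j = g := by
  haveI : NeZero n := ⟨hn.pos.ne'⟩
  haveI : Fact (Nat.Prime n) := ⟨hn⟩
  set G : Subgroup (Equiv.Perm (Fin n)) :=
    { carrier := {σ | A.image (fun x => x.image σ) = A}
      one_mem' := by simp
      mul_mem' := by
        intro σ τ hσ hτ
        simp only [Set.mem_setOf_eq] at *
        have h1 : (fun x : Finset (Fin n) => x.image (σ * τ)) =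
            fun x : Finset (Fin n) => (x.image τ).image σ := by
          funext x
          rw [Finset.image_image]
          rfl
        have h2 : A.image (fun x : Finset (Fin n) => (x.image τ).image σ) =
            (A.image (fun x => x.image τ)).image (fun x => x.image σ) := by
          rw [Finset.image_image]
          rfl
        rw [h1, h2, hτ, hσ]
      inv_mem' := by
        intro σ hσ
        simp only [Set.mem_setOf_eq] at *
        have key : (A.image (fun x => x.image (⇑σ))).image
            (fun x : Finset (Fin n) => x.image (⇑σ⁻¹)) = A := by
          rw [Finset.image_image]
          have h1 : ((fun x : Finset (Fin n) => x.image (⇑σ⁻¹)) ∘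
              fun x : Finset (Fin n) => x.image (⇑σ)) = id := by
            funext x
            simp only [Function.comp, Finset.image_image, id_eq]
            ext b
            simp [Function.comp]
          rw [h1, Finset.image_id]
        conv_lhs => rw [← hσ]
        exact key } with hG
  have hGmem : ∀ σ : Equiv.Perm (Fin n), σ ∈ G ↔ A.image (fun x => x.image σ) = A :=
    fun σ => Iff.rfl
  obtain ⟨a0⟩ : Nonempty (Fin n) := ⟨⟨0, hn.pos⟩⟩
  have horb : MulAction.orbit G a0 = Set.univ := by
    apply Set.eq_univ_of_forall
    intro b
    obtain ⟨σ, hσA, hσb⟩ := hsym a0 b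
    exact ⟨⟨σ, (hGmem σ).2 hσA⟩, hσb⟩
  have hdvd : n ∣ Fintype.card G := by
    have h2 := MulAction.card_orbit_mul_card_stabilizer_eq_card_group G a0
    have h3 : Fintype.card (MulAction.orbit G a0) = n := by
      have h4 : Fintype.card (MulAction.orbit G a0) = Fintype.card (Fin n) :=
        Fintype.card_congr ((Equiv.setCongr horb).trans (Equiv.Set.univ _))
      simpa using h4
    rw [h3] at h2
    exact ⟨_, h2.symm⟩
  obtain ⟨g, hg⟩ := exists_prime_orderOf_dvd_card n hdvd
  set σ : Equiv.Perm (Fin n) := (g : Equiv.Perm (Fin n)) with hσdef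
  have hσord : orderOf σ = n := by
    have h5 : orderOf (G.subtype g) = orderOf g :=
      orderOf_injective G.subtype G.subtype_injective g
    exact h5.trans hg
  have hσG : σ ∈ G := g.2
  have hσne : σ ≠ 1 := by
    intro h
    rw [h, orderOf_one] at hσord
    exact hn.one_lt.ne hσord
  obtain ⟨a, ha⟩ : ∃ a, σ a ≠ a := by
    by_contra h
    push_neg at h
    exact hσne (Equiv.ext h)
  have hpow1 : σ ^ n = 1 := by
    have h6 := pow_orderOf_eq_one σ
    rwa [hσord] at h6
  -- σ^t fixes a only if n ∣ t
  have hfix : ∀ t : ℕ, (σ ^ t) a = a → n ∣ t := by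
    intro t ht
    by_contra hnd
    have hcop : IsCoprime (n : ℤ) (t : ℤ) :=
      Int.isCoprime_iff_gcd_eq_one.mpr (by
        exact_mod_cast (hn.coprime_iff_not_dvd.mpr hnd))
    obtain ⟨u, v, huv⟩ := hcop
    have h1 : σ ^ ((u * n + v * t : ℤ)) = σ := by rw [huv, zpow_one]
    have h2 : (σ ^ ((u * n + v * t : ℤ))) a = a := by
      rw [zpow_add, Equiv.Perm.mul_apply]
      have hvt : (σ ^ (v * t : ℤ)) a = a := by
        rw [mul_comm, zpow_mul, zpow_natCast]
        exact Equiv.Perm.zpow_apply_eq_self_of_apply_eq_self ht v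
      rw [hvt, mul_comm, zpow_mul, zpow_natCast, hpow1, one_zpow, Equiv.Perm.one_apply]
    rw [h1] at h2
    exact ha h2
  -- difference of exponents
  have hfix2 : ∀ s t : ℕ, t ≤ s → (σ ^ s) a = (σ ^ t) a → n ∣ s - t := by
    intro s t hts h
    apply hfix
    have hs : s = t + (s - t) := by omega
    rw [hs, pow_add, Equiv.Perm.mul_apply] at h
    exact (σ ^ t).injective h
  -- the bijection
  set f : ZMod n → Fin n := fun m => (σ ^ m.val) a with hf
  have hinj : Function.Injective f := by
    intro m1 m2 h
    have hlt1 := ZMod.val_lt m1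
    have hlt2 := ZMod.val_lt m2
    have key : m1.val = m2.val := by
      rcases le_total m1.val m2.val with hle | hle
      · have hd := hfix2 _ _ hle h.symm
        have h0 := Nat.eq_zero_of_dvd_of_lt hd
        omega
      · have hd := hfix2 _ _ hle h
        have h0 := Nat.eq_zero_of_dvd_of_lt hd
        omega
    exact ZMod.val_injective n key
  have hbij : Function.Bijective f := by
    rw [Fintype.bijective_iff_injective_and_card]
    exact ⟨hinj, by simp [ZMod.card]⟩
  set e : ZMod n ≃ Fin n := Equiv.ofBijective f hbij with he
  have hef : ∀ m : ZMod n, e m = f m := fun m => rfl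
  obtain ⟨x0, hx0⟩ := hne
  refine ⟨x0.image e.symm, ?_, ?_⟩
  · rw [Finset.card_image_of_injective _ e.symm.injective]
    exact hcard x0 hx0
  · intro d
    -- translate x0 by σ^(d.val)
    have hpowG : σ ^ d.val ∈ G := pow_mem hσG d.val
    have hx1 : x0.image (fun p => (σ ^ d.val) p) ∈ A := by
      have h8 := (hGmem (σ ^ d.val)).1 hpowG
      rw [← h8]
      exact Finset.mem_image_of_mem _ hx0
    obtain ⟨p, hp⟩ := hint x0 hx0 _ hx1
    rw [Finset.mem_inter] at hp
    obtain ⟨hp1, hp2⟩ := hp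
    rw [Finset.mem_image] at hp2
    obtain ⟨q, hq, hqp⟩ := hp2
    refine ⟨e.symm p, Finset.mem_image_of_mem _ hp1, e.symm q, Finset.mem_image_of_mem _ hq, ?_⟩
    -- show e.symm p - e.symm q = d, i.e. e.symm p = d + e.symm q
    rw [sub_eq_iff_eq_add']
    apply e.injective
    rw [Equiv.apply_symm_apply, hef]
    have hfq : f (e.symm q) = q := by rw [← hef, Equiv.apply_symm_apply]
    have hmod : σ ^ ((d.val + (e.symm q).val) % n) = σ ^ (d.val + (e.symm q).val) := by
      have h7 := pow_mod_orderOf σ (d.val + (e.symm q).val)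
      rwa [hσord] at h7
    have hstep : f (d + e.symm q) = (σ ^ (d.val + (e.symm q).val)) a := by
      rw [hf]
      simp only
      rw [ZMod.val_add, hmod]
    rw [add_comm (e.symm q) d, hstep, pow_add, Equiv.Perm.mul_apply]
    have : (σ ^ (e.symm q).val) a = q := hfq
    rw [this, hqp]

lemma family_of_cover (n m : ℕ) [NeZero n] (S : Finset (ZMod n))
    (hcov : ∀ g : ZMod n, ∃ i ∈ S, ∃ j ∈ S, i - j = g) (hm : S.card = m) :
    ∃ A : Finset (Finset (Fin n)), A.Nonempty ∧ (∀ x ∈ A, x.card = m) ∧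
      IsSymmetricFam A ∧ IsIntersecting A := by
  have hψ : Fintype.card (ZMod n) = n := ZMod.card n
  set ψ : ZMod n ≃ Fin n := Fintype.equivFinOfCardEq hψ with hψdef
  set T : ZMod n → Finset (Fin n) := fun g => (S.image (· + g)).image ψ with hT
  have hTg : ∀ g s, s ∈ S → ψ (s + g) ∈ T g := by
    intro g s hs
    exact Finset.mem_image_of_mem _ (Finset.mem_image_of_mem _ hs)
  have hTcard : ∀ g, (T g).card = m := by
    intro g
    rw [hT]
    simp only
    rw [Finset.card_image_of_injective _ ψ.injective,
      Finset.card_image_of_injective _ (add_left_injective g), hm]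
  refine ⟨Finset.univ.image T, ⟨T 0, Finset.mem_image_of_mem T (Finset.mem_univ 0)⟩, ?_, ?_, ?_⟩
  · intro x hx
    rw [Finset.mem_image] at hx
    obtain ⟨g, _, rfl⟩ := hx
    exact hTcard g
  · -- symmetric
    intro i j
    set d : ZMod n := ψ.symm j - ψ.symm i with hd
    set σ : Equiv.Perm (Fin n) := ψ.symm.trans ((Equiv.addRight d).trans ψ) with hσ
    have hσapp : ∀ x, σ x = ψ (ψ.symm x + d) := fun x => rfl
    refine ⟨σ, ?_, ?_⟩
    · have hTσ : ∀ g, (T g).image σ = T (g + d) := by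
        intro g
        rw [hT]
        simp only [Finset.image_image]
        apply Finset.image_congr
        intro s _
        simp only [Function.comp_apply]
        rw [hσapp, Equiv.symm_apply_apply, add_assoc]
      rw [Finset.image_image]
      have : ((fun x : Finset (Fin n) => x.image σ) ∘ T) = fun g => T (g + d) := by
        funext g
        exact hTσ g
      rw [this]
      have : (fun g => T (g + d)) = T ∘ (Equiv.addRight d) := rfl
      rw [this, ← Finset.image_image, Finset.image_univ_equiv]
    · have h9 : ψ.symm i + d = ψ.symm j := by rw [hd]; ring
      rw [hσapp, h9, Equiv.apply_symm_apply]
  · -- intersecting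
    intro x hx y hy
    rw [Finset.mem_image] at hx hy
    obtain ⟨g, _, rfl⟩ := hx
    obtain ⟨h, _, rfl⟩ := hy
    obtain ⟨i, hi, j, hj, hij⟩ := hcov (g - h)
    have heq : j + g = i + h := by linear_combination -hij
    refine ⟨ψ (j + g), Finset.mem_inter.mpr ⟨hTg g j hj, ?_⟩⟩
    rw [heq]
    exact hTg h i hi

/-- For `n` prime: if there is a nonempty symmetric intersecting family of `k`-element
subsets of `[n]`, then `ℤ_n` has a difference cover of size `k`; consequently
`g(n) = h(ℤ_n)`. -/
theorem prime_symmetric_intersecting_gives_difference_cover (n : ℕ) (hn : Nat.Prime n) :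
    (∀ k : ℕ,
      (∃ A : Finset (Finset (Fin n)), A.Nonempty ∧ (∀ x ∈ A, x.card = k) ∧
        IsSymmetricFam A ∧ IsIntersecting A) →
      ∃ x : Finset (ZMod n), x.card = k ∧ ∀ g : ZMod n, ∃ i ∈ x, ∃ j ∈ x, i - j = g) ∧
    gFun n = hZMod n := by
  haveI : NeZero n := ⟨hn.pos.ne'⟩
  refine ⟨?_, ?_⟩
  · rintro k ⟨A, hne, hc, hs, hi⟩
    exact cover_of_family n k hn A hne hc hs hi
  · have hbdd : ∀ k : ℕ, BddAbove {m | ∃ A : Finset (Finset (Fin n)),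
        (∀ x ∈ A, x.card = k) ∧ IsSymmetricFam A ∧ IsIntersecting A ∧ A.card = m} := by
      intro k
      refine ⟨Fintype.card (Finset (Fin n)), ?_⟩
      rintro m ⟨A, -, -, -, rfl⟩
      exact Finset.card_le_univ A
    have hzero : ∀ k : ℕ, 0 ∈ {m | ∃ A : Finset (Finset (Fin n)),
        (∀ x ∈ A, x.card = k) ∧ IsSymmetricFam A ∧ IsIntersecting A ∧ A.card = m} := by
      intro k
      refine ⟨∅, ?_, ?_, ?_, rfl⟩
      · intro x hx
        simp at hx
      · intro i j
        exact ⟨Equiv.swap i j, by simp, Equiv.swap_apply_left i j⟩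
      · intro x hx
        simp at hx
    have hset : {k | 0 < symIntMax n k} =
        {m | ∃ S : Finset (ZMod n), (∀ g : ZMod n, ∃ i ∈ S, ∃ j ∈ S, i - j = g) ∧
          S.card = m} := by
      ext k
      simp only [Set.mem_setOf_eq]
      constructor
      · intro hk
        unfold symIntMax at hk
        have hmem := Nat.sSup_mem ⟨0, hzero k⟩ (hbdd k)
        obtain ⟨A, hc, hs, hi, hcardA⟩ := hmem
        have hApos : 0 < A.card := by rw [hcardA]; exact hk
        obtain ⟨x, hx1, hx2⟩ := cover_of_family n k hn A (Finset.card_pos.mp hApos) hc hs hi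
        exact ⟨x, hx2, hx1⟩
      · rintro ⟨S, hcov, hm⟩
        obtain ⟨A, hne, hc, hs, hi⟩ := family_of_cover n k S hcov hm
        have hmem : A.card ∈ {m | ∃ A : Finset (Finset (Fin n)),
            (∀ x ∈ A, x.card = k) ∧ IsSymmetricFam A ∧ IsIntersecting A ∧ A.card = m} :=
          ⟨A, hc, hs, hi, rfl⟩
        unfold symIntMax
        calc (0:ℕ) < A.card := Finset.card_pos.mpr hne
          _ ≤ _ := le_csSup (hbdd k) hmem
    unfold gFun hZMod
    rw [hset]
end

section
/- Let d ∈ ℕ with d ≥ 2 and suppose n = d² + d + 1 is prime. If there exists a transitive projective plane of order d, then s(n, d+1) = d² + d + 1; if there exists no transitive projective plane of order d, then s(n, d+1) = 0. -/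
open scoped Classical
open Finset

section AuxPP


/-- `L` is the line-set of a projective plane of order `d` (on its `d²+d+1` points):
every line has `d+1` points, two distinct points lie on a unique line, two distinct
lines meet in exactly one point, and there are four points no three collinear. -/
def IsProjPlane (d : ℕ) (L : Finset (Finset (Fin (d ^ 2 + d + 1)))) : Prop :=
  (∀ ℓ ∈ L, ℓ.card = d + 1) ∧
  (∀ p q : Fin (d ^ 2 + d + 1), p ≠ q → ∃! ℓ, ℓ ∈ L ∧ p ∈ ℓ ∧ q ∈ ℓ) ∧
  (∀ ℓ₁ ∈ L, ∀ ℓ₂ ∈ L, ℓ₁ ≠ ℓ₂ → (ℓ₁ ∩ ℓ₂).card = 1) ∧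
  (∃ P : Finset (Fin (d ^ 2 + d + 1)), P.card = 4 ∧ ∀ ℓ ∈ L, (P ∩ ℓ).card ≤ 2)

/-- A projective plane is transitive if its automorphism group (permutations of the
points mapping lines to lines) acts transitively on the points. -/
def IsTransitivePlane (d : ℕ) (L : Finset (Finset (Fin (d ^ 2 + d + 1)))) : Prop :=
  ∀ p q : Fin (d ^ 2 + d + 1), ∃ σ : Equiv.Perm (Fin (d ^ 2 + d + 1)), σ p = q ∧
    ∀ ℓ : Finset (Fin (d ^ 2 + d + 1)), ℓ ∈ L ↔ ℓ.image σ ∈ L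

/-- number of representations of `z` as `b - c`, `b ∈ B`, `c ∈ C`. -/
def rr {n : ℕ} (B C : Finset (ZMod n)) (z : ZMod n) : ℕ :=
  ((B ×ˢ C).filter (fun p => p.1 - p.2 = z)).card

lemma rr_pos_iff {n : ℕ} (B C : Finset (ZMod n)) (z : ZMod n) :
    0 < rr B C z ↔ ∃ b ∈ B, ∃ c ∈ C, b - c = z := by
  rw [rr, Finset.card_pos, Finset.filter_nonempty_iff]
  constructor
  · rintro ⟨⟨b, c⟩, hm, h⟩
    rw [Finset.mem_product] at hm
    exact ⟨b, hm.1, c, hm.2, h⟩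
  · rintro ⟨b, hb, c, hc, h⟩
    exact ⟨(b, c), Finset.mem_product.2 ⟨hb, hc⟩, h⟩

lemma sum_rr {n : ℕ} [NeZero n] (B C : Finset (ZMod n)) :
    ∑ z : ZMod n, rr B C z = B.card * C.card := by
  rw [← Finset.card_product]
  exact (Finset.card_eq_sum_card_fiberwise
    (f := fun p : ZMod n × ZMod n => p.1 - p.2) (s := B ×ˢ C)
    (t := Finset.univ) (fun x _ => Finset.mem_univ _)).symm

lemma rr_self_zero {n : ℕ} (B : Finset (ZMod n)) : rr B B 0 = B.card := by
  rw [rr]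
  apply Finset.card_nbij' (i := fun p => p.1) (j := fun b => (b, b))
  · rintro ⟨b, c⟩ hm
    rw [Finset.mem_coe, Finset.mem_filter, Finset.mem_product] at hm
    exact hm.1.1
  · intro b hb
    simp [Finset.mem_filter, Finset.mem_product, Finset.mem_coe.1 hb]
  · rintro ⟨b, c⟩ hm
    rw [Finset.mem_coe, Finset.mem_filter, Finset.mem_product, sub_eq_zero] at hm
    exact Prod.ext rfl hm.2
  · intro b hb; rfl

lemma zmod_sub_helper {n : ℕ} (a b c e : ZMod n) : a - b = c - e ↔ a - c = b - e := by
  constructor <;> intro h <;> linear_combination h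

lemma sum_rr_sq {n : ℕ} [NeZero n] (B C : Finset (ZMod n)) :
    ∑ z : ZMod n, rr B C z * rr B C z = ∑ w : ZMod n, rr B B w * rr C C w := by
  classical
  have key : ∀ (S T : Finset (ZMod n × ZMod n)),
      (((S ×ˢ T)).filter (fun q => q.1.1 - q.1.2 = q.2.1 - q.2.2)).card
      = ∑ z : ZMod n, (S.filter (fun p => p.1 - p.2 = z)).card *
          (T.filter (fun p => p.1 - p.2 = z)).card := by
    intro S T
    rw [Finset.card_eq_sum_card_fiberwise
      (f := fun q : (ZMod n × ZMod n) × (ZMod n × ZMod n) => q.1.1 - q.1.2)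
      (t := Finset.univ) (fun x _ => Finset.mem_univ _)]
    refine Finset.sum_congr rfl (fun z _ => ?_)
    rw [← Finset.card_product]
    congr 1
    ext ⟨⟨a, b⟩, ⟨c, e⟩⟩
    simp only [Finset.mem_filter, Finset.mem_product]
    constructor
    · rintro ⟨⟨⟨h1, h2⟩, h3⟩, h4⟩
      exact ⟨⟨h1, h4⟩, h2, h4 ▸ h3.symm⟩
    · rintro ⟨⟨h1, h4⟩, h2, h3⟩
      exact ⟨⟨⟨h1, h2⟩, h4.trans h3.symm⟩, h4⟩
  have h1 := key (B ×ˢ C) (B ×ˢ C)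
  have h2 := key (B ×ˢ B) (C ×ˢ C)
  rw [show (∑ z : ZMod n, rr B C z * rr B C z) = _ from h1.symm,
      show (∑ w : ZMod n, rr B B w * rr C C w) = _ from h2.symm]
  apply Finset.card_nbij'
    (i := fun q => ((q.1.1, q.2.1), (q.1.2, q.2.2)))
    (j := fun q => ((q.1.1, q.2.1), (q.1.2, q.2.2)))
  · rintro ⟨⟨b, c⟩, ⟨b', c'⟩⟩ hm
    simp only [Finset.mem_coe, Finset.mem_filter, Finset.mem_product] at hm ⊢
    obtain ⟨⟨⟨h1, h2⟩, h3, h4⟩, h5⟩ := hm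
    exact ⟨⟨⟨h1, h3⟩, h2, h4⟩, (zmod_sub_helper _ _ _ _).1 h5⟩
  · rintro ⟨⟨b, b'⟩, ⟨c, c'⟩⟩ hm
    simp only [Finset.mem_coe, Finset.mem_filter, Finset.mem_product] at hm ⊢
    obtain ⟨⟨⟨h1, h2⟩, h3, h4⟩, h5⟩ := hm
    exact ⟨⟨⟨h1, h3⟩, h2, h4⟩, (zmod_sub_helper _ _ _ _).2 h5⟩
  · rintro ⟨⟨b, c⟩, ⟨b', c'⟩⟩ _; rfl
  · rintro ⟨⟨b, b'⟩, ⟨c, c'⟩⟩ _; rfl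

lemma rr_le_card {n : ℕ} (B C : Finset (ZMod n)) (z : ZMod n) : rr B C z ≤ B.card := by
  apply Finset.card_le_card_of_injOn (f := Prod.fst)
  · rintro ⟨b, c⟩ hm
    rw [Finset.mem_coe, Finset.mem_filter, Finset.mem_product] at hm
    exact hm.1.1
  · rintro ⟨b, c⟩ hm ⟨b', c'⟩ hm' h
    simp only [Finset.coe_filter, Set.mem_setOf_eq] at hm hm'
    simp only at h
    subst h
    have : c = c' := by linear_combination hm'.2 - hm.2
    exact Prod.ext rfl this

lemma eq_translate_of_rr_eq {n : ℕ} (B C : Finset (ZMod n)) (z : ZMod n)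
    (hcard : C.card = B.card) (h : rr B C z = B.card) :
    C = B.image (fun b => b - z) := by
  -- first: every b ∈ B has b - z ∈ C
  have hsub : B.image (fun b => b - z) ⊆ C := by
    intro y hy
    rw [Finset.mem_image] at hy
    obtain ⟨b, hb, rfl⟩ := hy
    by_contra hyc
    -- then rr B C z ≤ B.card - 1 : the fiber misses b
    have hproj : ∀ p ∈ (B ×ˢ C).filter (fun p => p.1 - p.2 = z), Prod.fst p ∈ B.erase b := by
      rintro ⟨b', c'⟩ hm
      rw [Finset.mem_filter, Finset.mem_product] at hm
      refine Finset.mem_erase.2 ⟨?_, hm.1.1⟩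
      rintro rfl
      apply hyc
      have : c' = b' - z := by
        have := hm.2; simp only at this; linear_combination -this
      rw [← this] at hyc
      exact absurd hm.1.2 hyc
    have hinj : Set.InjOn Prod.fst (((B ×ˢ C).filter (fun p => p.1 - p.2 = z) : Finset (ZMod n × ZMod n)) : Set (ZMod n × ZMod n)) := by
      rintro ⟨b1, c1⟩ hm1 ⟨b2, c2⟩ hm2 hh
      simp only [Finset.coe_filter, Set.mem_setOf_eq] at hm1 hm2
      simp only at hh
      subst hh
      have : c1 = c2 := by linear_combination hm2.2 - hm1.2
      exact Prod.ext rfl this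
    have := Finset.card_le_card_of_injOn _ hproj hinj
    rw [show ((B ×ˢ C).filter (fun p => p.1 - p.2 = z)).card = rr B C z from rfl, h] at this
    have hb' : (B.erase b).card < B.card := Finset.card_erase_lt_of_mem hb
    omega
  have hcard2 : (B.image (fun b => b - z)).card = C.card := by
    rw [Finset.card_image_of_injective _ (sub_left_injective), hcard]
  exact (Finset.eq_of_subset_of_card_le hsub (le_of_eq hcard2.symm)).symm

lemma all_one_of_sum_eq {α : Type*} (s : Finset α) (f : α → ℕ)
    (h1 : ∀ i ∈ s, 1 ≤ f i) (h2 : ∑ i ∈ s, f i = s.card) : ∀ i ∈ s, f i = 1 := by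
  by_contra hc
  push_neg at hc
  obtain ⟨i, hi, hne⟩ := hc
  have : ∑ x ∈ s, (1 : ℕ) < ∑ x ∈ s, f x :=
    Finset.sum_lt_sum h1 ⟨i, hi, lt_of_le_of_ne (h1 i hi) (Ne.symm hne)⟩
  rw [Finset.sum_const, smul_eq_mul, mul_one, h2] at this
  omega


section Plane
variable {d : ℕ}

lemma perfect_diff (B : Finset (ZMod (d ^ 2 + d + 1)))
    (hB : B.card = d + 1) (hcov : ∀ z, 0 < rr B B z) :
    ∀ w, w ≠ 0 → rr B B w = 1 := by
  haveI : NeZero (d ^ 2 + d + 1) := ⟨by omega⟩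
  have hsum := sum_rr B B
  rw [hB] at hsum
  have hsplit : ∑ z : ZMod (d ^ 2 + d + 1), rr B B z
      = rr B B 0 + ∑ z ∈ Finset.univ.erase 0, rr B B z := by
    rw [← Finset.sum_erase_add _ _ (Finset.mem_univ 0), add_comm]
  have hcarderase : (Finset.univ.erase (0 : ZMod (d ^ 2 + d + 1))).card = d ^ 2 + d := by
    rw [Finset.card_erase_of_mem (Finset.mem_univ 0), Finset.card_univ, ZMod.card]
    omega
  have h0 : rr B B 0 = d + 1 := by rw [rr_self_zero, hB]
  have hsum2 : ∑ z ∈ Finset.univ.erase 0, rr B B z = d ^ 2 + d := by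
    rw [hsplit, h0] at hsum
    have : (d + 1) * (d + 1) = (d + 1) + (d ^ 2 + d) := by ring
    omega
  intro w hw
  exact all_one_of_sum_eq _ _ (fun i _ => hcov i) (by rw [hsum2, hcarderase])
    w (Finset.mem_erase.2 ⟨hw, Finset.mem_univ w⟩)

lemma translate_of_perfect (hd : 2 ≤ d) (B C : Finset (ZMod (d ^ 2 + d + 1)))
    (hB : B.card = d + 1) (hC : C.card = d + 1)
    (hBp : ∀ w, w ≠ 0 → rr B B w = 1) (hCp : ∀ w, w ≠ 0 → rr C C w = 1)
    (hcov : ∀ z, 0 < rr B C z) :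
    ∃ x, C = B.image (fun b => b - x) := by
  haveI : NeZero (d ^ 2 + d + 1) := ⟨by omega⟩
  have hsum : ∑ z : ZMod (d ^ 2 + d + 1), rr B C z = (d + 1) * (d + 1) := by
    rw [sum_rr, hB, hC]
  have hsq : ∑ z : ZMod (d ^ 2 + d + 1), rr B C z * rr B C z
      = (d + 1) * (d + 1) + (d ^ 2 + d) := by
    rw [sum_rr_sq]
    have key : ∀ w : ZMod (d ^ 2 + d + 1), w ≠ 0 → rr B B w * rr C C w = 1 := by
      intro w hw; rw [hBp w hw, hCp w hw]
    rw [← Finset.sum_erase_add _ _ (Finset.mem_univ (0 : ZMod (d ^ 2 + d + 1)))]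
    rw [Finset.sum_congr rfl (fun w hw => key w (Finset.mem_erase.1 hw).1)]
    rw [Finset.sum_const, smul_eq_mul, mul_one, rr_self_zero, rr_self_zero, hB, hC,
      Finset.card_erase_of_mem (Finset.mem_univ 0), Finset.card_univ, ZMod.card]
    have h1 : d ^ 2 + d + 1 - 1 = d ^ 2 + d := by omega
    rw [h1]; ring
  set e : ZMod (d ^ 2 + d + 1) → ℕ := fun z => rr B C z - 1 with he
  have hre : ∀ z, rr B C z = e z + 1 := by
    intro z; have := hcov z; simp only [he]; omega
  have hsume : ∑ z : ZMod (d ^ 2 + d + 1), e z = d := by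
    have h3 : ∑ z : ZMod (d ^ 2 + d + 1), rr B C z
        = (∑ z : ZMod (d ^ 2 + d + 1), e z) + (d ^ 2 + d + 1) := by
      rw [Finset.sum_congr rfl (fun z _ => hre z), Finset.sum_add_distrib,
        Finset.sum_const, smul_eq_mul, mul_one, Finset.card_univ, ZMod.card]
    rw [hsum] at h3
    have h2 : (d + 1) * (d + 1) = d + (d ^ 2 + d + 1) := by ring
    omega
  have hsume2 : ∑ z : ZMod (d ^ 2 + d + 1), e z * e z = d * d := by
    have hexp : ∀ z : ZMod (d ^ 2 + d + 1),
        rr B C z * rr B C z = e z * e z + 2 * e z + 1 := by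
      intro z; rw [hre z]; ring
    have h3 : ∑ z : ZMod (d ^ 2 + d + 1), rr B C z * rr B C z
        = (∑ z : ZMod (d ^ 2 + d + 1), e z * e z)
          + 2 * (∑ z : ZMod (d ^ 2 + d + 1), e z) + (d ^ 2 + d + 1) := by
      rw [Finset.sum_congr rfl (fun z _ => hexp z), Finset.sum_add_distrib,
        Finset.sum_add_distrib, Finset.sum_const, smul_eq_mul, mul_one,
        Finset.card_univ, ZMod.card, ← Finset.mul_sum]
    rw [hsq, hsume] at h3
    have h2 : (d + 1) * (d + 1) + (d ^ 2 + d) = d * d + 2 * d + (d ^ 2 + d + 1) := by ring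
    omega
  have heled : ∀ z : ZMod (d ^ 2 + d + 1), e z ≤ d := by
    intro z
    calc e z ≤ ∑ z : ZMod (d ^ 2 + d + 1), e z :=
          Finset.single_le_sum (fun i _ => Nat.zero_le _) (Finset.mem_univ z)
    _ = d := hsume
  have hall : ∀ z : ZMod (d ^ 2 + d + 1), e z * e z = d * e z := by
    have hle : ∀ z ∈ (Finset.univ : Finset (ZMod (d ^ 2 + d + 1))), e z * e z ≤ d * e z :=
      fun z _ => Nat.mul_le_mul_right _ (heled z)
    have hsums : ∑ z : ZMod (d ^ 2 + d + 1), e z * e z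
        = ∑ z : ZMod (d ^ 2 + d + 1), d * e z := by
      rw [hsume2, ← Finset.mul_sum, hsume]
    intro z
    exact (Finset.sum_eq_sum_iff_of_le hle).1 hsums z (Finset.mem_univ z)
  have hex : ∃ z₀, e z₀ = d := by
    by_contra hc
    push_neg at hc
    have hz : ∀ z : ZMod (d ^ 2 + d + 1), e z = 0 := by
      intro z
      rcases Nat.eq_zero_or_pos (e z) with h0 | h0
      · exact h0
      · exact absurd (Nat.eq_of_mul_eq_mul_right h0
          (by rw [← hall z])) (hc z)
    rw [Finset.sum_congr rfl (fun z _ => hz z), Finset.sum_const] at hsume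
    simp at hsume
    omega
  obtain ⟨z₀, hz₀⟩ := hex
  have hfin : rr B C z₀ = B.card := by rw [hre z₀, hz₀, hB]
  exact ⟨z₀, eq_translate_of_rr_eq B C z₀ (by rw [hB, hC]) hfin⟩

end Plane

lemma exists_shift {n : ℕ} (hn : 2 ≤ n) (hp : n.Prime) (A : Finset (Finset (Fin n)))
    (hsym : IsSymmetricFam A) :
    ∃ f : ZMod n ≃ Fin n, ∃ σ : Equiv.Perm (Fin n),
      A.image (fun x => x.image σ) = A ∧ ∀ k : ZMod n, σ (f k) = f (k + 1) := by
  haveI : NeZero n := ⟨by omega⟩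
  haveI : Fact (1 < n) := ⟨by omega⟩
  haveI : Fact n.Prime := ⟨hp⟩
  let G : Subgroup (Equiv.Perm (Fin n)) :=
  { carrier := {σ | A.image (fun x => x.image σ) = A}
    one_mem' := by
      simp only [Set.mem_setOf_eq, Equiv.Perm.coe_one, Finset.image_id]
      exact Finset.image_id
    mul_mem' := by
      intro a b ha hb
      simp only [Set.mem_setOf_eq] at ha hb ⊢
      have h : (fun x : Finset (Fin n) => x.image (a * b))
          = (fun x : Finset (Fin n) => x.image a) ∘ (fun x => x.image b) := by
        funext x
        simp [Function.comp, Finset.image_image, Equiv.Perm.coe_mul]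
      rw [h, ← Finset.image_image, hb, ha]
    inv_mem' := by
      intro a ha
      simp only [Set.mem_setOf_eq] at ha ⊢
      conv_lhs => rw [← ha]
      rw [Finset.image_image]
      have h : ((fun x : Finset (Fin n) => x.image ↑a⁻¹) ∘ (fun x => x.image a))
          = id := by
        funext x
        ext y
        simp [Function.comp]
      rw [h, Finset.image_id] }
  haveI : Fintype G := Fintype.ofFinite G
  have horb : (MulAction.orbit G (0 : Fin n)) = Set.univ := by
    apply Set.eq_univ_of_forall
    intro j
    obtain ⟨σ, hσ, hσ0⟩ := hsym 0 j
    exact ⟨⟨σ, hσ⟩, hσ0⟩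
  have hdvd : n ∣ Fintype.card G := by
    have hos := MulAction.card_orbit_mul_card_stabilizer_eq_card_group G (0 : Fin n)
    have hcardorb : Fintype.card (MulAction.orbit G (0 : Fin n)) = n := by
      have e : MulAction.orbit G (0 : Fin n) ≃ Fin n := by
        rw [horb]; exact Equiv.Set.univ (Fin n)
      rw [Fintype.card_congr e, Fintype.card_fin]
    rw [hcardorb] at hos
    exact ⟨_, hos.symm⟩
  obtain ⟨g, hg⟩ := exists_prime_orderOf_dvd_card n hdvd
  set σ : Equiv.Perm (Fin n) := (g : Equiv.Perm (Fin n)) with hσdef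
  have hσord : orderOf σ = n := by rw [hσdef, Subgroup.orderOf_coe, hg]
  have hσmem : A.image (fun x => x.image σ) = A := g.2
  have hσne : σ ≠ 1 := by
    intro h
    rw [h, orderOf_one] at hσord
    omega
  have hfix : ∀ b : Fin n, ∀ m : ℕ, 0 < m → m < n → (σ ^ m) b = b → σ b = b := by
    intro b m hm hmn hma
    have hnd : ¬ n ∣ m := Nat.not_dvd_of_pos_of_lt hm hmn
    have hmun : (m : ZMod n) ≠ 0 := by
      rwa [Ne, ZMod.natCast_eq_zero_iff]
    set u := ((m : ZMod n)⁻¹).val with hu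
    have hmu : (m * u) % n = 1 := by
      have h1 : ((m * u : ℕ) : ZMod n) = 1 := by
        push_cast [hu]
        rw [ZMod.natCast_val, ZMod.cast_id]
        exact mul_inv_cancel₀ hmun
      have h2 := congrArg ZMod.val h1
      rwa [ZMod.val_natCast, ZMod.val_one] at h2
    have hpowfix : ∀ k : ℕ, ((σ ^ m) ^ k) b = b := by
      intro k
      induction k with
      | zero => simp
      | succ k ih => rw [pow_succ, Equiv.Perm.mul_apply, hma, ih]
    have hσeq : σ ^ (m * u) = σ := by
      rw [← pow_mod_orderOf, hσord, hmu, pow_one]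
    rw [← hσeq, pow_mul]
    exact hpowfix u
  obtain ⟨a, ha⟩ : ∃ a : Fin n, σ a ≠ a := by
    by_contra hc
    push_neg at hc
    exact hσne (Equiv.ext fun x => by rw [hc x, Equiv.Perm.one_apply])
  set f0 : ZMod n → Fin n := fun k => (σ ^ k.val) a with hf0
  have key : ∀ i j : ZMod n, i.val < j.val → f0 i = f0 j → False := by
    intro i j h hij
    simp only [hf0] at hij
    have hm : (σ ^ (j.val - i.val)) ((σ ^ i.val) a) = (σ ^ i.val) a := by
      have hsplit : σ ^ j.val = σ ^ (j.val - i.val) * σ ^ i.val := by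
        rw [← pow_add]; congr 1; omega
      rw [hsplit, Equiv.Perm.mul_apply] at hij
      exact hij.symm
    have hb := hfix ((σ ^ i.val) a) (j.val - i.val) (by omega)
      (by have := j.val_lt; omega) hm
    have h2 : (σ ^ i.val) (σ a) = (σ ^ i.val) a := by
      calc (σ ^ i.val) (σ a) = (σ ^ i.val * σ) a := by rw [Equiv.Perm.mul_apply]
      _ = (σ * σ ^ i.val) a := by rw [← pow_succ, ← pow_succ']
      _ = σ ((σ ^ i.val) a) := by rw [Equiv.Perm.mul_apply]
      _ = (σ ^ i.val) a := hb
    exact ha ((σ ^ i.val).injective h2)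
  have hinj : Function.Injective f0 := by
    intro i j hij
    by_contra hne
    rcases lt_trichotomy i.val j.val with h1 | h1 | h1
    · exact key i j h1 hij
    · exact hne (ZMod.val_injective n h1)
    · exact key j i h1 hij.symm
  have hbij : Function.Bijective f0 :=
    (Fintype.bijective_iff_injective_and_card f0).2 ⟨hinj, by simp [ZMod.card]⟩
  refine ⟨Equiv.ofBijective f0 hbij, σ, hσmem, ?_⟩
  intro k
  simp only [Equiv.ofBijective_apply, hf0]
  have h1 : (k + 1).val = (k.val + 1) % n := by
    rw [ZMod.val_add, ZMod.val_one]
  calc σ ((σ ^ k.val) a) = (σ ^ (k.val + 1)) a := by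
        rw [pow_succ', Equiv.Perm.mul_apply]
  _ = (σ ^ ((k.val + 1) % n)) a := by
        have h2 := pow_mod_orderOf σ (k.val + 1)
        rw [hσord] at h2
        rw [h2]
  _ = (σ ^ ((k + 1 : ZMod n)).val) a := by rw [h1]

section Transfer
variable {α β : Type*} [DecidableEq α] [DecidableEq β]

lemma card_image_image (e : α ↪ β) (A : Finset (Finset α)) :
    (A.image (fun x => x.image e)).card = A.card :=
  Finset.card_image_of_injective _ (fun x y h => by
    have := congrArg (fun s => s.image (fun b => b)) h
    exact Finset.image_injective e.injective h)

lemma mem_image_image (e : α ≃ β) (A : Finset (Finset α)) (x : Finset α) :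
    x.image (fun a => e a) ∈ A.image (fun x => x.image (fun a => e a)) ↔ x ∈ A := by
  constructor
  · intro h
    rw [Finset.mem_image] at h
    obtain ⟨y, hy, hxy⟩ := h
    have : y = x := Finset.image_injective e.injective hxy
    rwa [← this]
  · intro h
    exact Finset.mem_image_of_mem _ h

end Transfer

lemma shift_invariant_of_one {n : ℕ} [NeZero n] (A : Finset (Finset (ZMod n)))
    (h1 : A.image (fun x => x.image (fun b => b + 1)) = A) :
    ∀ B ∈ A, ∀ t : ZMod n, B.image (fun b => b + t) ∈ A := by
  have hnat : ∀ m : ℕ, ∀ B ∈ A, B.image (fun b => b + (m : ZMod n)) ∈ A := by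
    intro m
    induction m with
    | zero =>
      intro B hB
      simpa using hB
    | succ m ih =>
      intro B hB
      have h2 : B.image (fun b => b + ((m + 1 : ℕ) : ZMod n))
          = (B.image (fun b => b + (m : ZMod n))).image (fun b => b + 1) := by
        rw [Finset.image_image]
        congr 1
        funext b
        simp [Function.comp]
        push_cast
        ring
      rw [h2, ← h1]
      exact Finset.mem_image_of_mem _ (ih B hB)
  intro B hB t
  have := hnat t.val B hB
  rwa [ZMod.natCast_rightInverse t] at this

lemma upper_bound_zmod {d : ℕ} (hd : 2 ≤ d) (A : Finset (Finset (ZMod (d ^ 2 + d + 1))))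
    (hcard : ∀ x ∈ A, x.card = d + 1)
    (hshift : ∀ B ∈ A, ∀ t : ZMod (d ^ 2 + d + 1), B.image (fun b => b + t) ∈ A)
    (hint : IsIntersecting A) : A.card ≤ d ^ 2 + d + 1 := by
  haveI : NeZero (d ^ 2 + d + 1) := ⟨by omega⟩
  rcases A.eq_empty_or_nonempty with rfl | ⟨B, hB⟩
  · simp
  have hcov : ∀ C ∈ A, ∀ D ∈ A, ∀ z, 0 < rr C D z := by
    intro C hC D hD z
    obtain ⟨x, hx⟩ := hint C hC _ (hshift D hD z)
    rw [Finset.mem_inter, Finset.mem_image] at hx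
    obtain ⟨hxC, e, heD, hez⟩ := hx
    rw [rr_pos_iff]
    exact ⟨x, hxC, e, heD, by rw [← hez]; exact add_sub_cancel_left e z⟩
  have hperf : ∀ C ∈ A, ∀ w, w ≠ 0 → rr C C w = 1 :=
    fun C hC => perfect_diff C (hcard C hC) (hcov C hC C hC)
  have hsub : A ⊆ Finset.univ.image (fun x => B.image (fun b => b - x)) := by
    intro C hC
    obtain ⟨x, hx⟩ := translate_of_perfect hd B C (hcard B hB) (hcard C hC)
      (hperf B hB) (hperf C hC) (hcov B hB C hC)
    rw [Finset.mem_image]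
    exact ⟨x, Finset.mem_univ x, hx.symm⟩
  calc A.card ≤ _ := Finset.card_le_card hsub
  _ ≤ Finset.univ.card := Finset.card_image_le
  _ = d ^ 2 + d + 1 := by rw [Finset.card_univ, ZMod.card]

lemma cov_of_shift {n : ℕ} [NeZero n] (A : Finset (Finset (ZMod n)))
    (hshift : ∀ B ∈ A, ∀ t : ZMod n, B.image (fun b => b + t) ∈ A)
    (hint : IsIntersecting A) :
    ∀ C ∈ A, ∀ D ∈ A, ∀ z, 0 < rr C D z := by
  intro C hC D hD z
  obtain ⟨x, hx⟩ := hint C hC _ (hshift D hD z)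
  rw [Finset.mem_inter, Finset.mem_image] at hx
  obtain ⟨hxC, e, heD, hez⟩ := hx
  rw [rr_pos_iff]
  exact ⟨x, hxC, e, heD, by rw [← hez]; exact add_sub_cancel_left e z⟩

lemma family_main {d : ℕ} (hd : 2 ≤ d) (hp : Nat.Prime (d ^ 2 + d + 1))
    (A : Finset (Finset (Fin (d ^ 2 + d + 1))))
    (hcard : ∀ x ∈ A, x.card = d + 1) (hsym : IsSymmetricFam A)
    (hint : IsIntersecting A) :
    A.card ≤ d ^ 2 + d + 1 ∧
      (A.Nonempty → ∃ B : Finset (ZMod (d ^ 2 + d + 1)),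
        B.card = d + 1 ∧ ∀ w, w ≠ 0 → rr B B w = 1) := by
  haveI : NeZero (d ^ 2 + d + 1) := ⟨by omega⟩
  obtain ⟨f, σ, hσA, hshiftf⟩ := exists_shift (by omega) hp A hsym
  set A' : Finset (Finset (ZMod (d ^ 2 + d + 1))) :=
    A.image (fun x => x.image (fun a => f.symm a)) with hA'
  have hcard' : ∀ x ∈ A', x.card = d + 1 := by
    intro x hx
    rw [hA', Finset.mem_image] at hx
    obtain ⟨y, hy, rfl⟩ := hx
    rw [Finset.card_image_of_injective _ f.symm.injective]
    exact hcard y hy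
  have hint' : IsIntersecting A' := by
    intro x hx y hy
    rw [hA', Finset.mem_image] at hx hy
    obtain ⟨x0, hx0, rfl⟩ := hx
    obtain ⟨y0, hy0, rfl⟩ := hy
    rw [← Finset.image_inter _ _ f.symm.injective]
    exact (hint x0 hx0 y0 hy0).image _
  have hcomm : (fun b : Fin (d ^ 2 + d + 1) => f.symm b + 1) = fun b => f.symm (σ b) := by
    funext b
    have := hshiftf (f.symm b)
    rw [Equiv.apply_symm_apply] at this
    rw [this, Equiv.symm_apply_apply]
  have hone : A'.image (fun x => x.image (fun b => b + 1)) = A' := by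
    rw [hA', Finset.image_image]
    have h1 : ((fun x : Finset (ZMod (d ^ 2 + d + 1)) => x.image (fun b => b + 1)) ∘
        (fun x : Finset (Fin (d ^ 2 + d + 1)) => x.image (fun a => f.symm a)))
        = (fun x : Finset (Fin (d ^ 2 + d + 1)) =>
            (x.image (fun a => σ a)).image (fun a => f.symm a)) := by
      funext x
      simp only [Function.comp_apply, Finset.image_image]
      exact Finset.image_congr (fun b _ => congrFun hcomm b)
    rw [h1]
    have h2 : (fun x : Finset (Fin (d ^ 2 + d + 1)) =>
        (x.image (fun a => σ a)).image (fun a => f.symm a))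
        = (fun x : Finset (Fin (d ^ 2 + d + 1)) => x.image (fun a => f.symm a)) ∘
          (fun x : Finset (Fin (d ^ 2 + d + 1)) => x.image (fun a => σ a)) := rfl
    rw [h2, ← Finset.image_image, hσA]
  have hshift' := shift_invariant_of_one A' hone
  have hcardeq : A'.card = A.card :=
    Finset.card_image_of_injective _ (Finset.image_injective f.symm.injective)
  constructor
  · rw [← hcardeq]
    exact upper_bound_zmod hd A' hcard' hshift' hint'
  · rintro ⟨x, hx⟩
    have hA'ne : A'.Nonempty := ⟨_, Finset.mem_image_of_mem _ hx⟩
    obtain ⟨B, hB⟩ := hA'ne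
    exact ⟨B, hcard' B hB,
      perfect_diff B (hcard' B hB) (cov_of_shift A' hshift' hint' B hB B hB)⟩

lemma plane_card {d : ℕ} (hd : 2 ≤ d) (L : Finset (Finset (Fin (d ^ 2 + d + 1))))
    (hP : IsProjPlane d L) : L.card = d ^ 2 + d + 1 := by
  obtain ⟨h1, h2, h3, _⟩ := hP
  set T : Finset (Finset (Fin (d ^ 2 + d + 1)) × (Fin (d ^ 2 + d + 1) × Fin (d ^ 2 + d + 1))) :=
    (L ×ˢ (Finset.univ ×ˢ Finset.univ)).filter
      (fun x => x.2.1 ∈ x.1 ∧ x.2.2 ∈ x.1 ∧ x.2.1 ≠ x.2.2) with hT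
  -- count by lines
  have hcount1 : T.card = L.card * (d ^ 2 + d) := by
    rw [Finset.card_eq_sum_card_fiberwise (f := fun x => x.1) (t := L)
      (fun x hx => by
        rw [hT, Finset.mem_coe, Finset.mem_filter, Finset.mem_product] at hx
        exact hx.1.1)]
    rw [Finset.sum_congr rfl (fun ℓ hℓ => ?_), Finset.sum_const, smul_eq_mul]
    show (T.filter (fun x => x.1 = ℓ)).card = d ^ 2 + d
    have hbij : (T.filter (fun x => x.1 = ℓ)).card = ℓ.offDiag.card := by
      apply Finset.card_nbij' (i := fun x => x.2) (j := fun pq => (ℓ, pq))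
      · rintro ⟨ℓ', p, q⟩ hx
        rw [Finset.mem_coe, Finset.mem_filter, hT, Finset.mem_filter, Finset.mem_product] at hx
        obtain ⟨⟨_, hp, hq, hne⟩, hl⟩ := hx
        subst hl
        exact Finset.mem_offDiag.2 ⟨hp, hq, hne⟩
      · rintro ⟨p, q⟩ hpq
        rw [Finset.mem_coe, Finset.mem_offDiag] at hpq
        rw [Finset.mem_coe, Finset.mem_filter, hT, Finset.mem_filter, Finset.mem_product]
        exact ⟨⟨⟨hℓ, Finset.mem_product.2 ⟨Finset.mem_univ _, Finset.mem_univ _⟩⟩,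
          hpq.1, hpq.2.1, hpq.2.2⟩, rfl⟩
      · rintro ⟨ℓ', p, q⟩ hx
        rw [Finset.mem_coe, Finset.mem_filter] at hx
        rw [← hx.2]
      · rintro ⟨p, q⟩ _
        rfl
    rw [hbij, Finset.offDiag_card, h1 ℓ hℓ]
    have hr : (d + 1) * (d + 1) = (d ^ 2 + d) + (d + 1) := by ring
    omega
  -- count by point pairs
  have hcount2 : T.card = (d ^ 2 + d + 1) * (d ^ 2 + d + 1) - (d ^ 2 + d + 1) := by
    rw [Finset.card_eq_sum_card_fiberwise (f := fun x => x.2)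
      (t := Finset.univ.offDiag)
      (fun x hx => by
        rw [hT, Finset.mem_coe, Finset.mem_filter] at hx
        exact Finset.mem_offDiag.2 ⟨Finset.mem_univ _, Finset.mem_univ _, hx.2.2.2⟩)]
    have hone : ∀ pq ∈ (Finset.univ : Finset (Fin (d ^ 2 + d + 1))).offDiag,
        (T.filter (fun x => x.2 = pq)).card = 1 := by
      rintro ⟨p, q⟩ hpq
      rw [Finset.mem_offDiag] at hpq
      obtain ⟨ℓ₀, ⟨hℓ₀L, hp₀, hq₀⟩, huniq⟩ := h2 p q hpq.2.2
      rw [Finset.card_eq_one]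
      refine ⟨(ℓ₀, (p, q)), ?_⟩
      ext ⟨ℓ', p', q'⟩
      rw [Finset.mem_filter, hT, Finset.mem_filter, Finset.mem_product,
        Finset.mem_singleton]
      constructor
      · rintro ⟨⟨⟨hl, -⟩, hp, hq, -⟩, hpq'⟩
        have h5 : (p', q') = (p, q) := hpq'
        rw [Prod.mk.injEq] at h5
        obtain ⟨rfl, rfl⟩ := h5
        rw [huniq ℓ' ⟨hl, hp, hq⟩]
      · rintro h5
        rw [Prod.mk.injEq] at h5
        obtain ⟨rfl, h5⟩ := h5
        rw [Prod.mk.injEq] at h5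
        obtain ⟨rfl, rfl⟩ := h5
        exact ⟨⟨⟨hℓ₀L, Finset.mem_product.2 ⟨Finset.mem_univ _, Finset.mem_univ _⟩⟩,
          hp₀, hq₀, hpq.2.2⟩, rfl⟩
    rw [Finset.sum_congr rfl hone, Finset.sum_const, smul_eq_mul, mul_one,
      Finset.offDiag_card, Finset.card_univ, Fintype.card_fin]
  rw [hcount2] at hcount1
  have hnn : (d ^ 2 + d + 1) * (d ^ 2 + d + 1) - (d ^ 2 + d + 1)
      = (d ^ 2 + d + 1) * (d ^ 2 + d) := by
    have hr : (d ^ 2 + d + 1) * (d ^ 2 + d + 1)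
        = (d ^ 2 + d + 1) * (d ^ 2 + d) + (d ^ 2 + d + 1) := by ring
    omega
  rw [hnn] at hcount1
  have hpos : 0 < d ^ 2 + d := by positivity
  exact Nat.eq_of_mul_eq_mul_right hpos hcount1.symm

lemma plane_of_diffset {d : ℕ} (hd : 2 ≤ d) (B : Finset (ZMod (d ^ 2 + d + 1)))
    (hB : B.card = d + 1) (hBp : ∀ w, w ≠ 0 → rr B B w = 1) :
    ∃ L : Finset (Finset (Fin (d ^ 2 + d + 1))),
      IsProjPlane d L ∧ IsTransitivePlane d L := by
  haveI : NeZero (d ^ 2 + d + 1) := ⟨by omega⟩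
  haveI : Fact (1 < d ^ 2 + d + 1) := ⟨by omega⟩
  obtain ⟨f⟩ : Nonempty (ZMod (d ^ 2 + d + 1) ≃ Fin (d ^ 2 + d + 1)) :=
    ⟨(Fintype.equivFin (ZMod (d ^ 2 + d + 1))).trans (finCongr (ZMod.card (d ^ 2 + d + 1)))⟩
  set T : ZMod (d ^ 2 + d + 1) → Finset (ZMod (d ^ 2 + d + 1)) :=
    fun t => B.image (fun b => b + t) with hT
  have hTcard : ∀ t, (T t).card = d + 1 := by
    intro t
    rw [hT, Finset.card_image_of_injective _ (add_left_injective t), hB]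
  have hmemT : ∀ (x : ZMod (d ^ 2 + d + 1)) t, x ∈ T t ↔ x - t ∈ B := by
    intro x t
    rw [hT]
    simp only [Finset.mem_image]
    constructor
    · rintro ⟨b, hb, rfl⟩
      rwa [add_sub_cancel_right]
    · intro h
      exact ⟨x - t, h, by ring⟩
  have hcov : ∀ w, 0 < rr B B w := by
    intro w
    rcases eq_or_ne w 0 with rfl | hw
    · rw [rr_self_zero, hB]; omega
    · rw [hBp w hw]; omega
  have hinter : ∀ t u : ZMod (d ^ 2 + d + 1), t ≠ u → (T t ∩ T u).card = 1 := by
    intro t u htu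
    have hcards : (T t ∩ T u).card = rr B B (t - u) := by
      rw [rr]
      apply Finset.card_nbij' (i := fun x => (x - u, x - t)) (j := fun p => p.1 + u)
      · intro x hx
        rw [Finset.mem_coe, Finset.mem_inter, hmemT, hmemT] at hx
        rw [Finset.mem_coe, Finset.mem_filter, Finset.mem_product]
        exact ⟨⟨hx.2, hx.1⟩, by ring⟩
      · rintro ⟨b, b'⟩ hp
        rw [Finset.mem_coe, Finset.mem_filter, Finset.mem_product] at hp
        obtain ⟨⟨hb, hb'⟩, hdiff⟩ := hp
        rw [Finset.mem_coe, Finset.mem_inter, hmemT, hmemT]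
        simp only
        constructor
        · have : b + u - t = b' := by linear_combination hdiff
          rwa [this]
        · rwa [add_sub_cancel_right]
      · intro x hx
        simp only
        ring
      · rintro ⟨b, b'⟩ hp
        rw [Finset.mem_coe, Finset.mem_filter, Finset.mem_product] at hp
        obtain ⟨-, hdiff⟩ := hp
        simp only [Prod.mk.injEq]
        constructor
        · ring
        · linear_combination hdiff
    rw [hcards]
    exact hBp _ (sub_ne_zero_of_ne htu)
  have hexist : ∀ p q : ZMod (d ^ 2 + d + 1), ∃ t, p ∈ T t ∧ q ∈ T t := by
    intro p q
    obtain ⟨b, hb, b', hb', hbb⟩ := (rr_pos_iff B B (p - q)).1 (hcov (p - q))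
    refine ⟨p - b, ?_, ?_⟩ <;> rw [hmemT]
    · rwa [sub_sub_cancel]
    · have h5 : q - (p - b) = b' := by linear_combination hbb
      rwa [h5]
  have htwo : ∀ (u v y z : ZMod (d ^ 2 + d + 1)), y ≠ z → y ∈ T u → z ∈ T u →
      y ∈ T v → z ∈ T v → T u = T v := by
    intro u v y z hyz hyu hzu hyv hzv
    rcases eq_or_ne u v with rfl | huv
    · rfl
    exfalso
    have h1 := hinter u v huv
    have h2 : 1 < (T u ∩ T v).card :=
      Finset.one_lt_card.2 ⟨y, Finset.mem_inter.2 ⟨hyu, hyv⟩, z,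
        Finset.mem_inter.2 ⟨hzu, hzv⟩, hyz⟩
    omega
  -- lines over Fin
  set TF : ZMod (d ^ 2 + d + 1) → Finset (Fin (d ^ 2 + d + 1)) :=
    fun t => (T t).image f with hTF
  set L : Finset (Finset (Fin (d ^ 2 + d + 1))) := Finset.univ.image TF with hL
  have hmemL : ∀ ℓ, ℓ ∈ L ↔ ∃ t, TF t = ℓ := by
    intro ℓ
    rw [hL, Finset.mem_image]
    constructor
    · rintro ⟨t, -, h⟩; exact ⟨t, h⟩
    · rintro ⟨t, h⟩; exact ⟨t, Finset.mem_univ t, h⟩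
  have hTFcard : ∀ t, (TF t).card = d + 1 := by
    intro t
    rw [hTF]
    simp only
    rw [Finset.card_image_of_injective _ f.injective, hTcard]
  have hmemTF : ∀ (x : ZMod (d ^ 2 + d + 1)) t, f x ∈ TF t ↔ x ∈ T t := by
    intro x t
    rw [hTF]
    simp only [Finset.mem_image]
    constructor
    · rintro ⟨y, hy, hxy⟩
      rwa [← f.injective hxy]
    · intro h
      exact ⟨x, h, rfl⟩
  have hTFinter : ∀ t u, TF t ∩ TF u = (T t ∩ T u).image f := by
    intro t u
    rw [hTF]
    simp only
    rw [Finset.image_inter _ _ f.injective]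
  have hTFeq : ∀ t u, TF t = TF u ↔ T t = T u := by
    intro t u
    constructor
    · intro h
      apply Finset.image_injective f.injective
      rw [hTF] at h
      exact h
    · intro h
      rw [hTF]
      simp only [h]
  -- the unique-line property over Fin
  have huniq : ∀ p q : Fin (d ^ 2 + d + 1), p ≠ q →
      ∃! ℓ, ℓ ∈ L ∧ p ∈ ℓ ∧ q ∈ ℓ := by
    intro p q hpq
    obtain ⟨t, hpt, hqt⟩ := hexist (f.symm p) (f.symm q)
    have hp' : p ∈ TF t := by
      have := (hmemTF (f.symm p) t).2 hpt
      rwa [Equiv.apply_symm_apply] at this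
    have hq' : q ∈ TF t := by
      have := (hmemTF (f.symm q) t).2 hqt
      rwa [Equiv.apply_symm_apply] at this
    refine ⟨TF t, ⟨(hmemL _).2 ⟨t, rfl⟩, hp', hq'⟩, ?_⟩
    rintro ℓ ⟨hℓL, hpℓ, hqℓ⟩
    obtain ⟨u, rfl⟩ := (hmemL ℓ).1 hℓL
    by_contra hne
    have hTne : T u ≠ T t := fun h => hne (by rw [hTFeq]; exact h)
    have huter : u ≠ t := fun h => hTne (by rw [h])
    have h1 := hinter u t huter
    have h2 : 1 < (T u ∩ T t).card := by
      have hsub : 1 < (TF u ∩ TF t).card :=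
        Finset.one_lt_card.2 ⟨p, Finset.mem_inter.2 ⟨hpℓ, hp'⟩, q,
          Finset.mem_inter.2 ⟨hqℓ, hq'⟩, hpq⟩
      rwa [hTFinter, Finset.card_image_of_injective _ f.injective] at hsub
    omega
  -- quadrilateral over ZMod
  have h01 : (0 : ZMod (d ^ 2 + d + 1)) ≠ 1 := by
    intro h
    have := congrArg ZMod.val h
    rw [ZMod.val_zero, ZMod.val_one] at this
    omega
  obtain ⟨x, hx⟩ := Finset.card_eq_one.1 (hinter 0 1 h01)
  have hx0 : x ∈ T 0 := (Finset.mem_inter.1 (hx ▸ Finset.mem_singleton_self x)).1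
  have hx1 : x ∈ T 1 := (Finset.mem_inter.1 (hx ▸ Finset.mem_singleton_self x)).2
  have hxchar : ∀ y, y ∈ T 0 → y ∈ T 1 → y = x := by
    intro y h0 h1
    have : y ∈ T 0 ∩ T 1 := Finset.mem_inter.2 ⟨h0, h1⟩
    rw [hx, Finset.mem_singleton] at this
    exact this
  have herase0 : 1 < ((T 0).erase x).card := by
    rw [Finset.card_erase_of_mem hx0, hTcard]; omega
  have herase1 : 1 < ((T 1).erase x).card := by
    rw [Finset.card_erase_of_mem hx1, hTcard]; omega
  obtain ⟨a₁, ha₁, a₂, ha₂, ha12⟩ := Finset.one_lt_card.1 herase0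
  obtain ⟨b₁, hb₁, b₂, hb₂, hb12⟩ := Finset.one_lt_card.1 herase1
  rw [Finset.mem_erase] at ha₁ ha₂ hb₁ hb₂
  have hanb : ∀ y z : ZMod (d ^ 2 + d + 1), y ≠ x → y ∈ T 0 → z ≠ x → z ∈ T 1 → y ≠ z := by
    rintro y z hyx hy0 hzx hz1 rfl
    exact hyx (hxchar y hy0 hz1)
  have hab11 := hanb a₁ b₁ ha₁.1 ha₁.2 hb₁.1 hb₁.2
  have hab12 := hanb a₁ b₂ ha₁.1 ha₁.2 hb₂.1 hb₂.2
  have hab21 := hanb a₂ b₁ ha₂.1 ha₂.2 hb₁.1 hb₁.2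
  have hab22 := hanb a₂ b₂ ha₂.1 ha₂.2 hb₂.1 hb₂.2
  set P₀ : Finset (ZMod (d ^ 2 + d + 1)) := {a₁, a₂, b₁, b₂} with hP₀
  have hP₀card : P₀.card = 4 := by
    rw [hP₀]
    rw [Finset.card_insert_of_notMem (by simp [ha12, hab11, hab12]),
      Finset.card_insert_of_notMem (by simp [hab21, hab22]),
      Finset.card_insert_of_notMem (by simp [hb12]),
      Finset.card_singleton]
  have hP₀mem : ∀ w, w ∈ P₀ ↔ w = a₁ ∨ w = a₂ ∨ w = b₁ ∨ w = b₂ := by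
    intro w; rw [hP₀]; simp
  have hsub2 : ∀ (S : Finset (ZMod (d ^ 2 + d + 1))) (y z : ZMod (d ^ 2 + d + 1)),
      S ⊆ {y, z} → S.card ≤ 2 := by
    intro S y z hsub
    calc S.card ≤ ({y, z} : Finset (ZMod (d ^ 2 + d + 1))).card := Finset.card_le_card hsub
    _ ≤ 2 := by
        apply le_trans (Finset.card_insert_le _ _)
        simp
  have hquad : ∀ u, (P₀ ∩ T u).card ≤ 2 := by
    intro u
    by_cases hcase_a : a₁ ∈ T u ∧ a₂ ∈ T u
    · -- T u = T 0
      have hTu0 : T u = T 0 := htwo u 0 a₁ a₂ ha12 hcase_a.1 hcase_a.2 ha₁.2 ha₂.2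
      apply hsub2 _ a₁ a₂
      intro w hw
      rw [Finset.mem_inter, hP₀mem] at hw
      obtain ⟨hwP, hwT⟩ := hw
      rw [hTu0] at hwT
      rcases hwP with rfl | rfl | rfl | rfl
      · simp
      · simp
      · exact absurd (hxchar w hwT hb₁.2) hb₁.1
      · exact absurd (hxchar w hwT hb₂.2) hb₂.1
    by_cases hcase_b : b₁ ∈ T u ∧ b₂ ∈ T u
    · have hTu1 : T u = T 1 := htwo u 1 b₁ b₂ hb12 hcase_b.1 hcase_b.2 hb₁.2 hb₂.2
      apply hsub2 _ b₁ b₂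
      intro w hw
      rw [Finset.mem_inter, hP₀mem] at hw
      obtain ⟨hwP, hwT⟩ := hw
      rw [hTu1] at hwT
      rcases hwP with rfl | rfl | rfl | rfl
      · exact absurd (hxchar w ha₁.2 hwT) ha₁.1
      · exact absurd (hxchar w ha₂.2 hwT) ha₂.1
      · simp
      · simp
    -- at most one a and at most one b
    rw [not_and_or] at hcase_a hcase_b
    rcases hcase_a with hna | hna <;> rcases hcase_b with hnb | hnb
    · apply hsub2 _ a₂ b₂
      intro w hw
      rw [Finset.mem_inter, hP₀mem] at hw
      obtain ⟨hwP, hwT⟩ := hw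
      rcases hwP with rfl | rfl | rfl | rfl
      · exact absurd hwT hna
      · simp
      · exact absurd hwT hnb
      · simp
    · apply hsub2 _ a₂ b₁
      intro w hw
      rw [Finset.mem_inter, hP₀mem] at hw
      obtain ⟨hwP, hwT⟩ := hw
      rcases hwP with rfl | rfl | rfl | rfl
      · exact absurd hwT hna
      · simp
      · simp
      · exact absurd hwT hnb
    · apply hsub2 _ a₁ b₂
      intro w hw
      rw [Finset.mem_inter, hP₀mem] at hw
      obtain ⟨hwP, hwT⟩ := hw
      rcases hwP with rfl | rfl | rfl | rfl
      · simp
      · exact absurd hwT hna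
      · exact absurd hwT hnb
      · simp
    · apply hsub2 _ a₁ b₁
      intro w hw
      rw [Finset.mem_inter, hP₀mem] at hw
      obtain ⟨hwP, hwT⟩ := hw
      rcases hwP with rfl | rfl | rfl | rfl
      · simp
      · exact absurd hwT hna
      · simp
      · exact absurd hwT hnb
  refine ⟨L, ⟨?_, huniq, ?_, ?_⟩, ?_⟩
  · -- cards
    intro ℓ hℓ
    obtain ⟨t, rfl⟩ := (hmemL ℓ).1 hℓ
    exact hTFcard t
  · -- pairwise intersections
    intro ℓ₁ hℓ₁ ℓ₂ hℓ₂ hne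
    obtain ⟨t, rfl⟩ := (hmemL ℓ₁).1 hℓ₁
    obtain ⟨u, rfl⟩ := (hmemL ℓ₂).1 hℓ₂
    have htu : t ≠ u := fun h => hne (by rw [h])
    rw [hTFinter, Finset.card_image_of_injective _ f.injective]
    exact hinter t u htu
  · -- quadrilateral
    refine ⟨P₀.image f, ?_, ?_⟩
    · rw [Finset.card_image_of_injective _ f.injective, hP₀card]
    · intro ℓ hℓ
      obtain ⟨u, rfl⟩ := (hmemL ℓ).1 hℓ
      rw [hTF]
      simp only
      rw [← Finset.image_inter _ _ f.injective,
        Finset.card_image_of_injective _ f.injective]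
      exact hquad u
  · -- transitivity
    intro p q
    set c : ZMod (d ^ 2 + d + 1) := f.symm q - f.symm p with hc
    set σ : Equiv.Perm (Fin (d ^ 2 + d + 1)) :=
      f.symm.trans ((Equiv.addRight c).trans f) with hσ
    have hσapp : ∀ y : Fin (d ^ 2 + d + 1), σ y = f (f.symm y + c) := fun y => rfl
    have hkey : ∀ t, (TF t).image σ = TF (t + c) := by
      intro t
      rw [hTF, hT]
      simp only
      rw [Finset.image_image, Finset.image_image, Finset.image_image]
      apply Finset.image_congr
      intro y _
      show σ (f (y + t)) = f (y + (t + c))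
      rw [hσapp, Equiv.symm_apply_apply]
      exact congrArg f (add_assoc y t c)
    refine ⟨σ, ?_, ?_⟩
    · have hpc : f.symm p + c = f.symm q := by rw [hc]; ring
      rw [hσapp, hpc, Equiv.apply_symm_apply]
    · intro ℓ
      constructor
      · intro hℓ
        obtain ⟨t, rfl⟩ := (hmemL ℓ).1 hℓ
        rw [hkey]
        exact (hmemL _).2 ⟨t + c, rfl⟩
      · intro hℓ
        obtain ⟨u, hu⟩ := (hmemL _).1 hℓ
        have h2 := hkey (u - c)
        rw [sub_add_cancel] at h2
        have h4 := Finset.image_injective σ.injective (h2.trans hu)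
        rw [← h4]
        exact (hmemL _).2 ⟨u - c, rfl⟩

lemma plane_family {d : ℕ} (hd : 2 ≤ d) (L : Finset (Finset (Fin (d ^ 2 + d + 1))))
    (hP : IsProjPlane d L) (hTr : IsTransitivePlane d L) :
    (∀ x ∈ L, x.card = d + 1) ∧ IsSymmetricFam L ∧ IsIntersecting L ∧
      L.card = d ^ 2 + d + 1 := by
  obtain ⟨h1, h2, h3, h4⟩ := hP
  refine ⟨h1, ?_, ?_, plane_card hd L ⟨h1, h2, h3, h4⟩⟩
  · intro i j
    obtain ⟨σ, hσij, hσL⟩ := hTr i j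
    refine ⟨σ, ?_, hσij⟩
    have hsub : L.image (fun x => x.image σ) ⊆ L := by
      intro y hy
      rw [Finset.mem_image] at hy
      obtain ⟨ℓ, hℓ, rfl⟩ := hy
      exact (hσL ℓ).1 hℓ
    exact Finset.eq_of_subset_of_card_le hsub (le_of_eq
      (Finset.card_image_of_injective _ (Finset.image_injective σ.injective)).symm)
  · intro x hx y hy
    rcases eq_or_ne x y with rfl | hne
    · rw [Finset.inter_self, ← Finset.card_pos, h1 x hx]
      omega
    · rw [← Finset.card_pos, h3 x hx y hy hne]
      omega


/-- For `d ≥ 2` with `n = d² + d + 1` prime: if a transitive projective plane of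
order `d` exists then `s(n, d+1) = d² + d + 1`, and otherwise `s(n, d+1) = 0`. -/
theorem symIntMax_projective_plane (d : ℕ) (hd : 2 ≤ d)
    (hp : Nat.Prime (d ^ 2 + d + 1)) :
    ((∃ L : Finset (Finset (Fin (d ^ 2 + d + 1))),
        IsProjPlane d L ∧ IsTransitivePlane d L) →
      symIntMax (d ^ 2 + d + 1) (d + 1) = d ^ 2 + d + 1) ∧
    ((¬ ∃ L : Finset (Finset (Fin (d ^ 2 + d + 1))),
        IsProjPlane d L ∧ IsTransitivePlane d L) →
      symIntMax (d ^ 2 + d + 1) (d + 1) = 0) := by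
  rw [symIntMax]
  set S : Set ℕ := {m | ∃ A : Finset (Finset (Fin (d ^ 2 + d + 1))),
    (∀ x ∈ A, x.card = d + 1) ∧ IsSymmetricFam A ∧ IsIntersecting A ∧ A.card = m}
    with hS
  have h0 : 0 ∈ S := by
    refine ⟨∅, ?_, ?_, ?_, Finset.card_empty⟩
    · intro x hx; exact absurd hx (Finset.notMem_empty x)
    · intro i j
      exact ⟨Equiv.swap i j, by simp, Equiv.swap_apply_left i j⟩
    · intro x hx; exact absurd hx (Finset.notMem_empty x)
  have hne : S.Nonempty := ⟨0, h0⟩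
  have hub : ∀ m ∈ S, m ≤ d ^ 2 + d + 1 := by
    rintro m ⟨A, hc, hs, hi, rfl⟩
    exact (family_main hd hp A hc hs hi).1
  constructor
  · rintro ⟨L, hP, hTr⟩
    obtain ⟨hc, hs, hi, hcard⟩ := plane_family hd L hP hTr
    have hnS : (d ^ 2 + d + 1) ∈ S := ⟨L, hc, hs, hi, hcard⟩
    exact le_antisymm (csSup_le hne hub) (le_csSup ⟨d ^ 2 + d + 1, hub⟩ hnS)
  · intro hno
    have hz : ∀ m ∈ S, m ≤ 0 := by
      rintro m ⟨A, hc, hs, hi, rfl⟩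
      by_contra hpos
      have hAne : A.Nonempty := Finset.card_pos.1 (by omega)
      obtain ⟨B, hB, hBp⟩ := (family_main hd hp A hc hs hi).2 hAne
      exact hno (plane_of_diffset hd B hB hBp)
    exact Nat.le_zero.1 (csSup_le hne hz)

end AuxPP
end

section
/- Let q be a prime power. Then s(q² + q, q + 1) ≥ q²; that is, there exists a symmetric intersecting family of (q+1)-element subsets of a ground set of size q² + q whose size is at least q². (Such a family is given by the lines of the dual affine plane over 𝔽_q: identifying the ground set with the q²+q lines of the affine plane 𝔸²(𝔽_q), take for each point of 𝔸²(𝔽_q) the set of q+1 lines through it.) -/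
open scoped Classical

variable {F : Type} [Field F] [Fintype F]

noncomputable def lineF (x v : F × F) : Finset (F × F) :=
  Finset.univ.image (fun t : F => x + t • v)

lemma mem_lineF (x v p : F × F) : p ∈ lineF x v ↔ ∃ t : F, x + t • v = p := by
  simp [lineF]

lemma self_mem_lineF (x v : F × F) : x ∈ lineF x v :=
  (mem_lineF x v x).2 ⟨0, by simp⟩

lemma smul_injective_of_ne {v : F × F} (hv : v ≠ 0) :
    Function.Injective (fun t : F => t • v) := by
  intro s t hst
  have h : (s - t) • v = 0 := by
    simp only [sub_smul]
    simpa [sub_eq_zero] using congrArg (· - t • v) hst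
  rcases smul_eq_zero.mp h with h' | h'
  · exact sub_eq_zero.mp h'
  · exact absurd h' hv

lemma card_lineF (x : F × F) {v : F × F} (hv : v ≠ 0) :
    (lineF x v).card = Fintype.card F := by
  rw [lineF, Finset.card_image_of_injective _ ?_, Finset.card_univ]
  intro s t hst
  exact smul_injective_of_ne hv (by simpa using congrArg (· - x) hst)

lemma lineF_smul (x : F × F) {v : F × F} {c : F} (hc : c ≠ 0) :
    lineF x (c • v) = lineF x v := by
  ext p
  simp only [mem_lineF]
  constructor
  · rintro ⟨t, rfl⟩; exact ⟨t * c, by rw [mul_smul]⟩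
  · rintro ⟨t, rfl⟩; exact ⟨t / c, by rw [smul_smul, div_mul_cancel₀ _ hc]⟩

lemma lineF_translate (x v : F × F) (s : F) :
    lineF (x + s • v) v = lineF x v := by
  ext p
  simp only [mem_lineF]
  constructor
  · rintro ⟨t, rfl⟩; exact ⟨s + t, by rw [add_smul]; abel⟩
  · rintro ⟨t, rfl⟩; exact ⟨t - s, by rw [sub_smul]; abel⟩

lemma lineF_eq_of_mem {x v p : F × F} (hp : p ∈ lineF x v) :
    lineF p v = lineF x v := by
  obtain ⟨t, rfl⟩ := (mem_lineF x v p).1 hp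
  exact lineF_translate x v t

/-- Key: when two parametrized lines coincide. -/
lemma lineF_eq_iff {x v x' v' : F × F} (hv : v ≠ 0) (hv' : v' ≠ 0) :
    lineF x v = lineF x' v' ↔ x' ∈ lineF x v ∧ ∃ c : F, c ≠ 0 ∧ v' = c • v := by
  constructor
  · intro h
    have hx' : x' ∈ lineF x v := h ▸ self_mem_lineF x' v'
    obtain ⟨s, hs⟩ := (mem_lineF x v x').1 hx'
    have hx'v' : x' + v' ∈ lineF x v := by
      rw [h]; exact (mem_lineF x' v' _).2 ⟨1, by simp⟩
    obtain ⟨t, ht⟩ := (mem_lineF x v (x' + v')).1 hx'v'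
    have hv'eq : v' = (t - s) • v := by
      have h1 : x + s • v + v' = x + t • v := by rw [hs, ht]
      have h2 := congrArg (· - (x + s • v)) h1
      simp only [add_sub_cancel_left] at h2
      rw [h2, sub_smul]
      abel
    refine ⟨hx', t - s, ?_, hv'eq⟩
    intro h0
    exact hv' (by rw [hv'eq, h0, zero_smul])
  · rintro ⟨hx', c, hc, rfl⟩
    rw [lineF_smul x' hc, lineF_eq_of_mem hx']

noncomputable def Lines (F : Type) [Field F] [Fintype F] : Finset (Finset (F × F)) :=
  (Finset.univ.filter (fun xv : (F × F) × (F × F) => xv.2 ≠ 0)).image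
    (fun xv => lineF xv.1 xv.2)

lemma mem_Lines {l : Finset (F × F)} :
    l ∈ Lines F ↔ ∃ x v : F × F, v ≠ 0 ∧ l = lineF x v := by
  constructor
  · intro h
    rw [Lines, Finset.mem_image] at h
    obtain ⟨⟨x, v⟩, hxv, rfl⟩ := h
    rw [Finset.mem_filter] at hxv
    exact ⟨x, v, hxv.2, rfl⟩
  · rintro ⟨x, v, hv, rfl⟩
    exact Finset.mem_image.2 ⟨(x, v), Finset.mem_filter.2 ⟨Finset.mem_univ _, hv⟩, rfl⟩

lemma lineF_mem_Lines (x : F × F) {v : F × F} (hv : v ≠ 0) : lineF x v ∈ Lines F :=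
  mem_Lines.2 ⟨x, v, hv, rfl⟩

lemma two_le_cardF : 2 ≤ Fintype.card F := Fintype.one_lt_card

/-- nonzero multiples of a fixed nonzero vector -/
lemma card_multiples {v : F × F} (hv : v ≠ 0) :
    ((Finset.univ \ {0} : Finset F).image (fun c => c • v)).card
      = Fintype.card F - 1 := by
  rw [Finset.card_image_of_injective _ (smul_injective_of_ne hv)]
  rw [Finset.card_sdiff_of_subset (by simp), Finset.card_univ, Finset.card_singleton]

lemma card_nonzero_vectors :
    (Finset.univ \ {0} : Finset (F × F)).card + 1 = Fintype.card F ^ 2 := by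
  rw [Finset.card_sdiff_of_subset (by simp), Finset.card_univ, Finset.card_singleton,
    Fintype.card_prod, sq]
  have : 1 ≤ Fintype.card F * Fintype.card F :=
    Nat.one_le_iff_ne_zero.2 (by positivity)
  omega

/-- the fiber over a line `l = lineF x₀ v₀` of `(x,v) ↦ lineF x v`. -/
lemma fiber_eq (x₀ : F × F) {v₀ : F × F} (hv₀ : v₀ ≠ 0) :
    ((Finset.univ.filter (fun xv : (F × F) × (F × F) => xv.2 ≠ 0)).filter
        (fun xv => lineF xv.1 xv.2 = lineF x₀ v₀))
      = (lineF x₀ v₀) ×ˢ ((Finset.univ \ {0} : Finset F).image (fun c => c • v₀)) := by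
  ext ⟨x, v⟩
  simp only [Finset.mem_filter, Finset.mem_univ, true_and, Finset.mem_product,
    Finset.mem_image, Finset.mem_sdiff, Finset.mem_singleton]
  constructor
  · rintro ⟨hv, h⟩
    obtain ⟨hx₀, c, hc, hcv⟩ := (lineF_eq_iff hv hv₀).1 h
    have hx : x ∈ lineF x₀ v₀ := by
      rw [← h]; exact self_mem_lineF x v
    refine ⟨hx, c⁻¹, inv_ne_zero hc, ?_⟩
    rw [hcv, smul_smul, inv_mul_cancel₀ hc, one_smul]
  · rintro ⟨hx, c, hc, rfl⟩
    have hcv : c • v₀ ≠ 0 := by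
      simp [smul_eq_zero, hc, hv₀]
    refine ⟨hcv, ?_⟩
    rw [lineF_smul x hc, lineF_eq_of_mem hx]

lemma card_Lines :
    (Lines F).card = Fintype.card F ^ 2 + Fintype.card F := by
  classical
  set q := Fintype.card F with hq
  obtain ⟨d, hd⟩ : ∃ d, q = d + 2 := ⟨q - 2, by have := two_le_cardF (F := F); omega⟩
  set S := (Finset.univ.filter (fun xv : (F × F) × (F × F) => xv.2 ≠ 0)) with hS
  have hcount := Finset.card_eq_sum_card_fiberwise
    (f := fun xv : (F × F) × (F × F) => lineF xv.1 xv.2) (s := S) (t := Lines F)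
    (by rintro ⟨x, v⟩ hxv
        rw [Finset.mem_coe, Finset.mem_filter] at hxv
        exact lineF_mem_Lines x hxv.2)
  have hfib : ∀ l ∈ Lines F,
      (S.filter (fun xv : (F × F) × (F × F) => lineF xv.1 xv.2 = l)).card
        = q * (q - 1) := by
    intro l hl
    obtain ⟨x₀, v₀, hv₀, rfl⟩ := mem_Lines.1 hl
    rw [fiber_eq x₀ hv₀, Finset.card_product, card_lineF x₀ hv₀, card_multiples hv₀]
  rw [Finset.sum_congr rfl hfib, Finset.sum_const, smul_eq_mul] at hcount
  have hScard : S.card = q ^ 2 * (q ^ 2 - 1) := by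
    have : S = (Finset.univ : Finset (F × F)) ×ˢ (Finset.univ \ {0}) := by
      ext ⟨x, v⟩
      simp [hS]
    rw [this, Finset.card_product, Finset.card_univ, Fintype.card_prod, ← sq]
    congr 1
    have h := card_nonzero_vectors (F := F)
    rw [← hq] at h
    omega
  rw [hScard] at hcount
  have hq1 : q - 1 = d + 1 := by omega
  have hq2 : q ^ 2 - 1 = q ^ 2 - 1 := rfl
  have hq2' : q ^ 2 = (d + 2) ^ 2 := by rw [hd]
  have h1 : q ^ 2 - 1 = d * d + 4 * d + 3 := by
    have : (d + 2) ^ 2 = d * d + 4 * d + 4 := by ring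
    omega
  have key : (q ^ 2 + q) * (q * (q - 1)) = q ^ 2 * (q ^ 2 - 1) := by
    rw [hq1, h1, hd]
    ring
  have hpos : 0 < q * (q - 1) := by
    rw [hq1, hd]; positivity
  exact Nat.eq_of_mul_eq_mul_right hpos (by rw [key, hcount])

lemma card_lines_through (p : F × F) :
    ((Lines F).filter (fun l => p ∈ l)).card = Fintype.card F + 1 := by
  classical
  set q := Fintype.card F with hq
  obtain ⟨d, hd⟩ : ∃ d, q = d + 2 := ⟨q - 2, by have := two_le_cardF (F := F); omega⟩
  set T := (Finset.univ \ {0} : Finset (F × F)) with hT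
  have hcount := Finset.card_eq_sum_card_fiberwise
    (f := fun v : F × F => lineF p v) (s := T) (t := (Lines F).filter (fun l => p ∈ l))
    (by intro v hv
        rw [Finset.mem_coe, Finset.mem_sdiff, Finset.mem_singleton] at hv
        exact Finset.mem_filter.2 ⟨lineF_mem_Lines p hv.2, self_mem_lineF p v⟩)
  have hfib : ∀ l ∈ (Lines F).filter (fun l => p ∈ l),
      (T.filter (fun v => lineF p v = l)).card = q - 1 := by
    intro l hl
    rw [Finset.mem_filter] at hl
    obtain ⟨x₀, w, hw, rfl⟩ := mem_Lines.1 hl.1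
    have hrep : lineF p w = lineF x₀ w := lineF_eq_of_mem hl.2
    have : T.filter (fun v => lineF p v = lineF x₀ w)
        = (Finset.univ \ {0} : Finset F).image (fun c => c • w) := by
      ext v
      simp only [Finset.mem_filter, hT, Finset.mem_sdiff, Finset.mem_singleton,
        Finset.mem_univ, true_and, Finset.mem_image]
      constructor
      · rintro ⟨hv, h⟩
        have h' : lineF p v = lineF p w := by rw [h, hrep]
        obtain ⟨-, c, hc, hcv⟩ := (lineF_eq_iff hw hv).1 h'.symm
        exact ⟨c, hc, hcv.symm⟩
      · rintro ⟨c, hc, rfl⟩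
        have hcw : c • w ≠ 0 := by simp [smul_eq_zero, hc, hw]
        exact ⟨hcw, by rw [lineF_smul p hc, hrep]⟩
    rw [this, card_multiples hw]
  rw [Finset.sum_congr rfl hfib, Finset.sum_const, smul_eq_mul] at hcount
  have hTcard : T.card = q ^ 2 - 1 := by
    have h := card_nonzero_vectors (F := F)
    rw [← hq] at h
    rw [hT]
    omega
  rw [hTcard] at hcount
  have h1 : q ^ 2 - 1 = d * d + 4 * d + 3 := by
    have h2 : q ^ 2 = (d + 2) ^ 2 := by rw [hd]
    have : (d + 2) ^ 2 = d * d + 4 * d + 4 := by ring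
    omega
  have key : (q + 1) * (q - 1) = q ^ 2 - 1 := by
    have e : d + 2 - 1 = d + 1 := by omega
    rw [h1, hd, e]; ring
  have hpos : 0 < q - 1 := by omega
  exact Nat.eq_of_mul_eq_mul_right hpos (by rw [key, hcount])

lemma exists_not_smul (v : F × F) : ∃ w : F × F, ∀ t : F, w ≠ t • v := by
  by_contra h
  push_neg at h
  have hsurj : Function.Surjective (fun t : F => t • v) := by
    intro w; obtain ⟨t, ht⟩ := h w; exact ⟨t, ht.symm⟩
  have hle := Fintype.card_le_of_surjective _ hsurj
  rw [Fintype.card_prod] at hle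
  have h2 := two_le_cardF (F := F)
  nlinarith

lemma exists_linear_map {v₁ v₂ : F × F} (hv₁ : v₁ ≠ 0) (hv₂ : v₂ ≠ 0) :
    ∃ M : (F × F) ≃ₗ[F] (F × F), M v₁ = v₂ := by
  classical
  obtain ⟨w₁, hw₁⟩ := exists_not_smul v₁
  obtain ⟨w₂, hw₂⟩ := exists_not_smul v₂
  have hli₁ : LinearIndependent F ![w₁, v₁] := linearIndependent_fin2.2 ⟨hv₁, fun a h => hw₁ a h.symm⟩
  have hli₂ : LinearIndependent F ![w₂, v₂] := linearIndependent_fin2.2 ⟨hv₂, fun a h => hw₂ a h.symm⟩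
  have hrank : Fintype.card (Fin 2) = Module.finrank F (F × F) := by
    simp [Module.finrank_prod, Module.finrank_self]
  let b₁ := basisOfLinearIndependentOfCardEqFinrank hli₁ hrank
  let b₂ := basisOfLinearIndependentOfCardEqFinrank hli₂ hrank
  refine ⟨b₁.equiv b₂ (Equiv.refl _), ?_⟩
  have h1 : b₁ 1 = v₁ := by
    rw [show b₁ = _ from rfl, coe_basisOfLinearIndependentOfCardEqFinrank]
    rfl
  have h2 : b₂ 1 = v₂ := by
    rw [show b₂ = _ from rfl, coe_basisOfLinearIndependentOfCardEqFinrank]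
    rfl
  rw [← h1, Module.Basis.equiv_apply, Equiv.refl_apply, h2]

noncomputable def affEquiv (M : (F × F) ≃ₗ[F] (F × F)) (c : F × F) : (F × F) ≃ (F × F) where
  toFun z := M z + c
  invFun z := M.symm (z - c)
  left_inv z := by simp
  right_inv z := by simp

lemma image_lineF_affEquiv (M : (F × F) ≃ₗ[F] (F × F)) (c : F × F) (x v : F × F) :
    (lineF x v).image (affEquiv M c) = lineF (M x + c) (M v) := by
  rw [lineF, lineF, Finset.image_image]
  congr 1
  funext t
  simp only [Function.comp_apply, affEquiv, Equiv.coe_fn_mk, map_add, map_smul]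
  abel

lemma image_mem_Lines (M : (F × F) ≃ₗ[F] (F × F)) (c : F × F) {l : Finset (F × F)}
    (hl : l ∈ Lines F) : l.image (affEquiv M c) ∈ Lines F := by
  obtain ⟨x, v, hv, rfl⟩ := mem_Lines.1 hl
  rw [image_lineF_affEquiv]
  exact lineF_mem_Lines _ (fun h => hv (by simpa using congrArg M.symm h))

/-- the permutation of lines induced by an affine bijection -/
noncomputable def linePerm (M : (F × F) ≃ₗ[F] (F × F)) (c : F × F) :
    Equiv.Perm {l : Finset (F × F) // l ∈ Lines F} where
  toFun l := ⟨l.1.image (affEquiv M c), image_mem_Lines M c l.2⟩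
  invFun l := ⟨l.1.image (affEquiv M c).symm, by
    have : ⇑(affEquiv M c).symm = ⇑(affEquiv M.symm (-(M.symm c))) := by
      funext z
      simp [affEquiv, map_sub, sub_eq_add_neg]
    rw [this]
    exact image_mem_Lines _ _ l.2⟩
  left_inv l := by
    apply Subtype.ext
    simp [Finset.image_image]
  right_inv l := by
    apply Subtype.ext
    simp [Finset.image_image]

lemma linePerm_mem_iff (M : (F × F) ≃ₗ[F] (F × F)) (c : F × F)
    (l : {l : Finset (F × F) // l ∈ Lines F}) (p : F × F) :
    p ∈ l.1 ↔ affEquiv M c p ∈ (linePerm M c l).1 := by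
  simp only [linePerm, Equiv.coe_fn_mk, Finset.mem_image]
  constructor
  · intro hp; exact ⟨p, hp, rfl⟩
  · rintro ⟨p', hp', h⟩
    rwa [(affEquiv M c).injective h] at hp'

/-- the family: for each point, the set of lines through it -/
noncomputable def famF (p : F × F) : Finset {l : Finset (F × F) // l ∈ Lines F} :=
  Finset.univ.filter (fun l => p ∈ l.1)

lemma card_famF (p : F × F) : (famF p).card = Fintype.card F + 1 := by
  rw [← card_lines_through (F := F) p]
  apply Finset.card_bij (fun l _ => l.1)
  · intro l hl
    rw [famF, Finset.mem_filter] at hl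
    exact Finset.mem_filter.2 ⟨l.2, hl.2⟩
  · intro a ha b hb h
    exact Subtype.ext h
  · intro l hl
    rw [Finset.mem_filter] at hl
    exact ⟨⟨l, hl.1⟩, Finset.mem_filter.2 ⟨Finset.mem_univ _, hl.2⟩, rfl⟩

lemma famF_image_perm (M : (F × F) ≃ₗ[F] (F × F)) (c : F × F) (p : F × F) :
    (famF p).image (linePerm M c) = famF (affEquiv M c p) := by
  ext l'
  simp only [famF, Finset.mem_image, Finset.mem_filter, Finset.mem_univ, true_and]
  constructor
  · rintro ⟨l, hl, rfl⟩
    exact (linePerm_mem_iff M c l p).1 hl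
  · intro hl'
    refine ⟨(linePerm M c).symm l', ?_, by simp⟩
    have := (linePerm_mem_iff M c ((linePerm M c).symm l') p).2
    rw [Equiv.apply_symm_apply] at this
    exact this hl'

lemma famF_injective : Function.Injective (famF (F := F)) := by
  intro p p' h
  by_contra hne
  have hu : p' - p ≠ 0 := sub_ne_zero.2 (Ne.symm hne)
  obtain ⟨w, hw⟩ := exists_not_smul (p' - p)
  have hw0 : w ≠ 0 := by
    intro h0; exact hw 0 (by rw [h0, zero_smul])
  have hl : (⟨lineF p w, lineF_mem_Lines p hw0⟩ :
      {l : Finset (F × F) // l ∈ Lines F}) ∈ famF p :=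
    Finset.mem_filter.2 ⟨Finset.mem_univ _, self_mem_lineF p w⟩
  rw [h] at hl
  have hp' : p' ∈ lineF p w := (Finset.mem_filter.1 hl).2
  obtain ⟨t, ht⟩ := (mem_lineF p w p').1 hp'
  have ht0 : t ≠ 0 := by
    intro h0; apply hu; rw [h0, zero_smul, add_zero] at ht; rw [ht]; simp
  have : w = t⁻¹ • (p' - p) := by
    rw [← ht]; simp [smul_smul, inv_mul_cancel₀ ht0]
  exact hw t⁻¹ this

lemma lines_transitive (l₁ l₂ : {l : Finset (F × F) // l ∈ Lines F}) :
    ∃ (M : (F × F) ≃ₗ[F] (F × F)) (c : F × F), linePerm M c l₁ = l₂ := by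
  obtain ⟨x₁, v₁, hv₁, h₁⟩ := mem_Lines.1 l₁.2
  obtain ⟨x₂, v₂, hv₂, h₂⟩ := mem_Lines.1 l₂.2
  obtain ⟨M, hM⟩ := exists_linear_map hv₁ hv₂
  refine ⟨M, x₂ - M x₁, Subtype.ext ?_⟩
  have : (linePerm M (x₂ - M x₁) l₁).1 = l₁.1.image (affEquiv M (x₂ - M x₁)) := rfl
  rw [this, h₁, h₂, image_lineF_affEquiv, hM]
  congr 1
  abel

lemma exists_line_through_two (p p' : F × F) :
    ∃ l : {l : Finset (F × F) // l ∈ Lines F}, p ∈ l.1 ∧ p' ∈ l.1 := by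
  by_cases h : p = p'
  · subst h
    have hv : ((1, 0) : F × F) ≠ 0 := by
      intro h0
      exact one_ne_zero (congrArg Prod.fst h0)
    exact ⟨⟨lineF p (1, 0), lineF_mem_Lines p hv⟩, self_mem_lineF p _, self_mem_lineF p _⟩
  · have hv : p' - p ≠ 0 := sub_ne_zero.2 (Ne.symm h)
    refine ⟨⟨lineF p (p' - p), lineF_mem_Lines p hv⟩, self_mem_lineF p _, ?_⟩
    exact (mem_lineF _ _ _).2 ⟨1, by simp⟩

lemma master_abstract :
    ∃ A : Finset (Finset {l : Finset (F × F) // l ∈ Lines F}),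
      (∀ x ∈ A, x.card = Fintype.card F + 1) ∧ IsSymmetricFam A ∧ IsIntersecting A ∧
      A.card = Fintype.card F ^ 2 := by
  classical
  refine ⟨Finset.univ.image famF, ?_, ?_, ?_, ?_⟩
  · intro x hx
    obtain ⟨p, -, rfl⟩ := Finset.mem_image.1 hx
    exact card_famF p
  · intro l₁ l₂
    obtain ⟨M, c, hMc⟩ := lines_transitive l₁ l₂
    refine ⟨linePerm M c, ?_, hMc⟩
    rw [Finset.image_image]
    have h1 : (Finset.image (linePerm M c)) ∘ famF = famF ∘ (affEquiv M c) := by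
      funext p
      exact famF_image_perm M c p
    rw [h1, ← Finset.image_image]
    congr 1
    exact Finset.image_univ_equiv (affEquiv M c)
  · intro x hx y hy
    obtain ⟨p, -, rfl⟩ := Finset.mem_image.1 hx
    obtain ⟨p', -, rfl⟩ := Finset.mem_image.1 hy
    obtain ⟨l, hp, hp'⟩ := exists_line_through_two p p'
    exact ⟨l, Finset.mem_inter.2 ⟨Finset.mem_filter.2 ⟨Finset.mem_univ _, hp⟩,
      Finset.mem_filter.2 ⟨Finset.mem_univ _, hp'⟩⟩⟩
  · rw [Finset.card_image_of_injective _ famF_injective, Finset.card_univ,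
      Fintype.card_prod, sq]

lemma card_lines_sub :
    Fintype.card {l : Finset (F × F) // l ∈ Lines F}
      = Fintype.card F ^ 2 + Fintype.card F := by
  rw [Fintype.card_coe, card_Lines]

lemma master (F : Type) [Field F] [Fintype F] :
    ∃ A : Finset (Finset (Fin (Fintype.card F ^ 2 + Fintype.card F))),
      (∀ x ∈ A, x.card = Fintype.card F + 1) ∧ IsSymmetricFam A ∧ IsIntersecting A ∧
      A.card = Fintype.card F ^ 2 := by
  classical
  obtain ⟨A₀, hcard, hsym, hint, hA₀⟩ := master_abstract (F := F)
  let e := Fintype.equivFinOfCardEq (card_lines_sub (F := F))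
  refine ⟨A₀.image (Finset.image e), ?_, ?_, ?_, ?_⟩
  · intro x hx
    obtain ⟨x₀, hx₀, rfl⟩ := Finset.mem_image.1 hx
    rw [Finset.card_image_of_injective _ e.injective]
    exact hcard x₀ hx₀
  · intro i j
    obtain ⟨σ, hσ, hij⟩ := hsym (e.symm i) (e.symm j)
    refine ⟨e.permCongr σ, ?_, ?_⟩
    · rw [Finset.image_image]
      have h1 : (fun x : Finset _ => x.image (e.permCongr σ)) ∘ (Finset.image e)
          = (Finset.image e) ∘ (fun x => x.image σ) := by
        funext x
        simp only [Function.comp_apply, Finset.image_image]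
        congr 1
        funext l
        simp [Equiv.permCongr_apply]
      rw [h1, ← Finset.image_image, hσ]
    · simp [Equiv.permCongr_apply, hij]
  · intro x hx y hy
    obtain ⟨x₀, hx₀, rfl⟩ := Finset.mem_image.1 hx
    obtain ⟨y₀, hy₀, rfl⟩ := Finset.mem_image.1 hy
    obtain ⟨l, hl⟩ := hint x₀ hx₀ y₀ hy₀
    rw [Finset.mem_inter] at hl
    exact ⟨e l, Finset.mem_inter.2 ⟨Finset.mem_image_of_mem _ hl.1,
      Finset.mem_image_of_mem _ hl.2⟩⟩
  · rw [Finset.card_image_of_injective _ (Finset.image_injective e.injective), hA₀]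

lemma master' (q : ℕ) (F : Type) [Field F] [Fintype F] (h : Fintype.card F = q) :
    ∃ A : Finset (Finset (Fin (q ^ 2 + q))),
      (∀ x ∈ A, x.card = q + 1) ∧ IsSymmetricFam A ∧ IsIntersecting A ∧
      A.card = q ^ 2 := by
  subst h
  exact master F

lemma le_symIntMax {n k : ℕ} (A : Finset (Finset (Fin n)))
    (h1 : ∀ x ∈ A, x.card = k) (h2 : IsSymmetricFam A) (h3 : IsIntersecting A) :
    A.card ≤ symIntMax n k := by
  apply le_csSup
  · refine ⟨Fintype.card (Finset (Fin n)), ?_⟩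
    rintro m ⟨B, -, -, -, rfl⟩
    exact Finset.card_le_univ B
  · exact ⟨A, h1, h2, h3, rfl⟩


/-- For a prime power `q`, there is a symmetric intersecting family of `(q+1)`-element
subsets of a ground set of size `q² + q` of size at least `q²`; that is,
`s(q² + q, q + 1) ≥ q²`. -/
theorem dual_affine_plane_bound (q : ℕ) (hq : ∃ p r : ℕ, Nat.Prime p ∧ 0 < r ∧ q = p ^ r) :
    (∃ A : Finset (Finset (Fin (q ^ 2 + q))),
      (∀ x ∈ A, x.card = q + 1) ∧ IsSymmetricFam A ∧ IsIntersecting A ∧ q ^ 2 ≤ A.card) ∧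
    q ^ 2 ≤ symIntMax (q ^ 2 + q) (q + 1) := by
  obtain ⟨p, r, hp, hr, rfl⟩ := hq
  haveI : Fact p.Prime := ⟨hp⟩
  haveI : Fintype (GaloisField p r) := Fintype.ofFinite _
  have hcard : Fintype.card (GaloisField p r) = p ^ r := by
    rw [← Nat.card_eq_fintype_card]
    exact GaloisField.card p r hr.ne'
  obtain ⟨A, h1, h2, h3, h4⟩ := master' (p ^ r) (GaloisField p r) hcard
  refine ⟨⟨A, h1, h2, h3, h4.ge⟩, ?_⟩
  calc (p ^ r) ^ 2 = A.card := h4.symm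
    _ ≤ _ := le_symIntMax A h1 h2 h3
end
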